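/- arXiv:math/0503360 — 9 statements merged into one kernel-verified Lean document; each statement's English description precedes it below -/
import Mathlib

section
/- Let M be an abelian group and f: G → H an M-tension-continuous mapping between finite directed graphs. If C is an M-unbalanced circuit in G, then the image f(C) ⊆ E(H) contains an M-unbalanced circuit. -/
/-- A directed graph on vertex type `V`, given by its adjacency relation. -/
structure Dgraph (V : Type) where
  Adj : V → V → Prop

namespace Dgraph

variable {V : Type}

/-- The type of edges of a directed graph. -/
def Edge (D : Dgraph V) : Type := {p : V × V // D.Adj p.1 p.2}

def src {D : Dgraph V} (e : D.Edge) : V := e.1.1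
def tgt {D : Dgraph V} (e : D.Edge) : V := e.1.2

/-- A closed walk of length `n+1`: at step `i` the edge `e i` is traversed
forwards (if `dir i`) or backwards, from `v i` to `v (i+1)` (cyclically). -/
def IsClosedWalk (D : Dgraph V) {n : ℕ} (v : Fin (n + 1) → V)
    (e : Fin (n + 1) → D.Edge) (dir : Fin (n + 1) → Bool) : Prop :=
  ∀ i, if dir i then src (e i) = v i ∧ tgt (e i) = v (i + 1)
    else tgt (e i) = v i ∧ src (e i) = v (i + 1)

/-- A circuit: a closed walk with pairwise distinct vertices. -/
def IsCircuit (D : Dgraph V) {n : ℕ} (v : Fin (n + 1) → V)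
    (e : Fin (n + 1) → D.Edge) (dir : Fin (n + 1) → Bool) : Prop :=
  D.IsClosedWalk v e dir ∧ Function.Injective v

/-- An `M`-tension: the signed sum along every circuit vanishes. -/
def IsTension {M : Type} [AddCommGroup M] (D : Dgraph V) (τ : D.Edge → M) : Prop :=
  ∀ (n : ℕ) (v : Fin (n + 1) → V) (e : Fin (n + 1) → D.Edge) (dir : Fin (n + 1) → Bool),
    D.IsCircuit v e dir → ∑ i, (if dir i then τ (e i) else -τ (e i)) = 0

/-- `f : E(G) → E(H)` is `M`-tension-continuous if it lifts `M`-tensions to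
`M`-tensions. -/
def TensionContinuous (M : Type) [AddCommGroup M] {V W : Type}
    (G : Dgraph V) (H : Dgraph W) (f : G.Edge → H.Edge) : Prop :=
  ∀ τ : H.Edge → M, H.IsTension τ → G.IsTension (τ ∘ f)

end Dgraph

/-- A circuit (given by its direction pattern) is `M`-balanced if
`(|C⁺| - |C⁻|) • m = 0` for every `m : M`. -/
def BalancedDir (M : Type) [AddCommGroup M] {n : ℕ} (dir : Fin (n + 1) → Bool) : Prop :=
  ∀ m : M, (((Finset.univ.filter fun i => dir i = true).card : ℤ) -
      ((Finset.univ.filter fun i => dir i = false).card : ℤ)) • m = 0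

/-! Suppose every circuit of `H` with edges in `S = f(C)` is `M`-balanced, and let `m` witness
that `C` is not. Then the function that is constantly `m` on `S` sums to zero around every circuit
of `S`, hence (splitting closed walks into circuits) around every closed walk in `S`, so it is the
coboundary `p (tgt x) - p (src x)` of a potential `p` defined on each component of `S` by summing
along a walk from a base point. A coboundary is a tension of `H`; pulling it back along `f` and
evaluating on `C` gives `(|C⁺| - |C⁻|) • m = 0`. -/

theorem sum_ite_neg_eq_card_sub_card_smul {ι M : Type} [Fintype ι] [AddCommGroup M]
    (dir : ι → Bool) (m : M) :
    ∑ i, (if dir i then m else -m) =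
      (((Finset.univ.filter fun i => dir i = true).card : ℤ) -
        ((Finset.univ.filter fun i => dir i = false).card : ℤ)) • m := by
  simp [Finset.sum_ite, sub_smul, natCast_zsmul, ← sub_eq_add_neg]

namespace Dgraph

variable {W M : Type} {H : Dgraph W}

/-! A walk is a list of oriented edges: `(x, true)` traverses `x` forwards, `(x, false)`
backwards. -/

def stepSrc (q : H.Edge × Bool) : W := if q.2 then src q.1 else tgt q.1

def stepTgt (q : H.Edge × Bool) : W := if q.2 then tgt q.1 else src q.1

def stepReverse (q : H.Edge × Bool) : H.Edge × Bool := (q.1, !q.2)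

@[simp] lemma stepSrc_stepReverse (q : H.Edge × Bool) : stepSrc (stepReverse q) = stepTgt q := by
  cases h : q.2 <;> simp [stepSrc, stepTgt, stepReverse, h]

@[simp] lemma stepTgt_stepReverse (q : H.Edge × Bool) : stepTgt (stepReverse q) = stepSrc q := by
  cases h : q.2 <;> simp [stepSrc, stepTgt, stepReverse, h]

def IsWalk : W → W → List (H.Edge × Bool) → Prop
  | a, b, [] => a = b
  | a, b, q :: l => stepSrc q = a ∧ IsWalk (stepTgt q) b l

@[simp] lemma isWalk_nil {a b : W} : IsWalk a b ([] : List (H.Edge × Bool)) ↔ a = b := Iff.rfl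

@[simp] lemma isWalk_cons {a b : W} {q : H.Edge × Bool} {l : List (H.Edge × Bool)} :
    IsWalk a b (q :: l) ↔ stepSrc q = a ∧ IsWalk (stepTgt q) b l := Iff.rfl

lemma isWalk_append {a c : W} {l₁ l₂ : List (H.Edge × Bool)} :
    IsWalk a c (l₁ ++ l₂) ↔ ∃ b, IsWalk a b l₁ ∧ IsWalk b c l₂ := by
  induction l₁ generalizing a with
  | nil => simp
  | cons q l ih => simp [ih, and_assoc]

lemma IsWalk.reverse {a b : W} {l : List (H.Edge × Bool)} (h : IsWalk a b l) :
    IsWalk b a (l.reverse.map stepReverse) := by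
  induction l generalizing a with
  | nil => exact h.symm
  | cons q l ih =>
    rw [List.reverse_cons, List.map_append, isWalk_append]
    exact ⟨stepTgt q, ih h.2, by simpa using h.1⟩

lemma IsWalk.map_stepSrc_append {a b : W} {l : List (H.Edge × Bool)} (h : IsWalk a b l) :
    l.map stepSrc ++ [b] = a :: l.map stepTgt := by
  induction l generalizing a with
  | nil => simpa using h.symm
  | cons q l ih => simp [ih h.2, h.1]

lemma IsWalk.isCircuit {a : W} {q : H.Edge × Bool} {l : List (H.Edge × Bool)}
    (h : IsWalk a a (q :: l)) (hnd : ((q :: l).map stepSrc).Nodup) :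
    H.IsCircuit (fun i : Fin (l.length + 1) => stepSrc (q :: l)[(i : ℕ)])
      (fun i => (q :: l)[(i : ℕ)].1) (fun i => (q :: l)[(i : ℕ)].2) := by
  have hv := h.map_stepSrc_append
  have hnext : ∀ i : Fin (l.length + 1),
      stepTgt (q :: l)[(i : ℕ)] = stepSrc (q :: l)[((i + 1 : Fin (l.length + 1)) : ℕ)] := by
    intro i
    have := congrArg (fun L => L[(i : ℕ) + 1]?) hv
    induction i using Fin.lastCases with
    | last => simpa [Fin.last_add_one, h.1, -List.map_cons] using this.symm
    | cast j => simpa [Fin.coeSucc_eq_succ, -List.map_cons] using this.symm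
  refine ⟨fun i => ?_, fun i j hij => Fin.ext ?_⟩
  · have := hnext i
    cases hd : (q :: l)[(i : ℕ)].2 <;> simp_all [stepSrc, stepTgt]
  · exact (hnd.getElem_inj_iff (hi := by simpa using i.isLt) (hj := by simpa using j.isLt)).mp
      (by simpa only [List.getElem_map] using hij)

def walkSetoid (S : Set H.Edge) : Setoid W where
  r a b := ∃ l, IsWalk a b l ∧ ∀ q ∈ l, q.1 ∈ S
  iseqv := by
    refine ⟨fun a => ⟨[], rfl, by simp⟩, ?_, ?_⟩
    · rintro a b ⟨l, hw, hS⟩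
      refine ⟨l.reverse.map stepReverse, hw.reverse, ?_⟩
      simpa only [List.forall_mem_map, List.mem_reverse, stepReverse] using hS
    · rintro a b c ⟨l₁, hw₁, hS₁⟩ ⟨l₂, hw₂, hS₂⟩
      exact ⟨l₁ ++ l₂, isWalk_append.mpr ⟨b, hw₁, hw₂⟩, List.forall_mem_append.mpr ⟨hS₁, hS₂⟩⟩

section Sums

variable [AddCommGroup M]

def coboundary (H : Dgraph W) (p : W → M) : H.Edge → M := fun x => p (tgt x) - p (src x)

def stepValue (τ : H.Edge → M) (q : H.Edge × Bool) : M := if q.2 then τ q.1 else -τ q.1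

def walkSum (τ : H.Edge → M) (l : List (H.Edge × Bool)) : M := (l.map (stepValue τ)).sum

@[simp] lemma walkSum_nil (τ : H.Edge → M) : walkSum τ [] = 0 := rfl

@[simp] lemma walkSum_cons (τ : H.Edge → M) (q : H.Edge × Bool) (l : List (H.Edge × Bool)) :
    walkSum τ (q :: l) = stepValue τ q + walkSum τ l := List.sum_cons

@[simp] lemma walkSum_append (τ : H.Edge → M) (l₁ l₂ : List (H.Edge × Bool)) :
    walkSum τ (l₁ ++ l₂) = walkSum τ l₁ + walkSum τ l₂ := by
  simp [walkSum]

@[simp] lemma walkSum_reverse (τ : H.Edge → M) (l : List (H.Edge × Bool)) :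
    walkSum τ (l.reverse.map stepReverse) = -walkSum τ l := by
  induction l with
  | nil => simp
  | cons q l ih =>
    rw [List.reverse_cons, List.map_append, walkSum_append, ih]
    cases h : q.2 <;> simp [stepValue, stepReverse, h]

def IsTensionOn (S : Set H.Edge) (τ : H.Edge → M) : Prop :=
  ∀ (n : ℕ) (v : Fin (n + 1) → W) (e : Fin (n + 1) → H.Edge) (dir : Fin (n + 1) → Bool),
    H.IsCircuit v e dir → (∀ i, e i ∈ S) → ∑ i, (if dir i then τ (e i) else -τ (e i)) = 0

variable {S : Set H.Edge} {τ : H.Edge → M}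

lemma IsTensionOn.walkSum_eq_zero_of_nodup (hτ : IsTensionOn S τ) {a : W}
    {l : List (H.Edge × Bool)} (h : IsWalk a a l) (hnd : (l.map stepSrc).Nodup)
    (hS : ∀ q ∈ l, q.1 ∈ S) : walkSum τ l = 0 := by
  cases l with
  | nil => rfl
  | cons q l =>
    exact (Fin.sum_univ_fun_getElem (q :: l) (stepValue τ)).symm.trans
      (hτ _ _ _ _ (h.isCircuit hnd) fun i => hS _ (List.getElem_mem _))

lemma IsTensionOn.exists_nodup_walk (hτ : IsTensionOn S τ) {a b : W}
    {l : List (H.Edge × Bool)} (h : IsWalk a b l) (hS : ∀ q ∈ l, q.1 ∈ S) :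
    ∃ l', IsWalk a b l' ∧ (l'.map stepSrc).Nodup ∧ (∀ q ∈ l', q.1 ∈ S) ∧
      walkSum τ l' = walkSum τ l := by
  induction l generalizing a with
  | nil => exact ⟨[], h, List.nodup_nil, by simp, rfl⟩
  | cons q l ih =>
    obtain ⟨l', hw, hnd, hS', hsum⟩ := ih h.2 fun r hr => hS r (List.mem_cons_of_mem _ hr)
    by_cases ha : a ∈ l'.map stepSrc
    · -- `a` recurs on `l'`: the loop `q :: l₁` from `a` back to `a` is a circuit; cut it out.
      obtain ⟨r, hr, hra⟩ := List.mem_map.mp ha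
      obtain ⟨l₁, l₂, rfl⟩ := List.append_of_mem hr
      obtain ⟨c, hw₁, hw₂⟩ := isWalk_append.mp hw
      obtain rfl : c = a := hw₂.1.symm.trans hra
      simp only [List.map_append, List.map_cons, List.nodup_append, List.nodup_cons] at hnd
      have hloop : walkSum τ (q :: l₁) = 0 := by
        refine hτ.walkSum_eq_zero_of_nodup ⟨h.1, hw₁⟩ ?_ ?_
        · rw [List.map_cons, List.nodup_cons, h.1, ← hra]
          exact ⟨fun hm => hnd.2.2 _ hm _ List.mem_cons_self rfl, hnd.1⟩
        · rintro x (_ | ⟨_, hx⟩)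
          exacts [hS q List.mem_cons_self, hS' x (List.mem_append_left _ hx)]
      refine ⟨r :: l₂, hw₂, List.nodup_cons.mpr hnd.2.1, fun x hx => hS' x (by simp [hx]), ?_⟩
      rw [walkSum_cons τ q l, ← hsum, walkSum_append, ← add_assoc, ← walkSum_cons, hloop,
        zero_add]
    · refine ⟨q :: l', ⟨h.1, hw⟩, ?_, ?_, by rw [walkSum_cons, walkSum_cons, hsum]⟩
      · rw [List.map_cons, List.nodup_cons, h.1]
        exact ⟨ha, hnd⟩
      · rintro x (_ | ⟨_, hx⟩)
        exacts [hS q List.mem_cons_self, hS' x hx]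

lemma IsTensionOn.walkSum_eq_zero (hτ : IsTensionOn S τ) {a : W} {l : List (H.Edge × Bool)}
    (h : IsWalk a a l) (hS : ∀ q ∈ l, q.1 ∈ S) : walkSum τ l = 0 := by
  obtain ⟨l', hw, hnd, hS', hsum⟩ := hτ.exists_nodup_walk h hS
  exact hsum ▸ hτ.walkSum_eq_zero_of_nodup hw hnd hS'

theorem IsTensionOn.exists_potential (hτ : IsTensionOn S τ) :
    ∃ p : W → M, ∀ x ∈ S, H.coboundary p x = τ x := by
  choose l hl hlS using fun w : W => Quotient.mk_out (s := walkSetoid S) w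
  refine ⟨fun w => walkSum τ (l w), fun x hx => ?_⟩
  have hbase : (Quotient.mk (walkSetoid S) (src x)).out = (Quotient.mk _ (tgt x)).out :=
    congrArg Quotient.out (Quotient.sound ⟨[(x, true)], ⟨rfl, rfl⟩, by simpa using hx⟩)
  have hwalk : IsWalk (Quotient.mk (walkSetoid S) (src x)).out (Quotient.mk _ (src x)).out
      (l (src x) ++ [(x, true)] ++ (l (tgt x)).reverse.map stepReverse) :=
    isWalk_append.mpr ⟨tgt x, isWalk_append.mpr ⟨src x, hl (src x), ⟨rfl, rfl⟩⟩,
      hbase ▸ (hl (tgt x)).reverse⟩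
  have hloop := hτ.walkSum_eq_zero hwalk <| by
    simp only [List.forall_mem_append, List.forall_mem_map, List.mem_reverse,
      List.forall_mem_singleton, stepReverse]
    exact ⟨⟨hlS (src x), hx⟩, hlS (tgt x)⟩
  simp only [walkSum_append, walkSum_reverse, walkSum_cons, walkSum_nil, stepValue, if_true,
    add_zero] at hloop
  show walkSum τ (l (tgt x)) - walkSum τ (l (src x)) = τ x
  linear_combination (norm := abel) -hloop

lemma isTension_coboundary (p : W → M) : H.IsTension (H.coboundary p) := by
  intro n v e dir hC
  have hstep : ∀ i, (if dir i then H.coboundary p (e i) else -H.coboundary p (e i)) =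
      p (v (i + 1)) - p (v i) := by
    intro i
    have hi := hC.1 i
    split_ifs at hi ⊢ <;> simp [coboundary, hi.1, hi.2]
  rw [Finset.sum_congr rfl fun i _ => hstep i, Finset.sum_sub_distrib, sub_eq_zero]
  exact Equiv.sum_comp (Equiv.addRight 1) fun i => p (v i)

end Sums

end Dgraph

theorem image_of_unbalanced_circuit_general {M : Type} [AddCommGroup M]
    {V W : Type}
    (G : Dgraph V) (H : Dgraph W) (f : G.Edge → H.Edge)
    (hf : Dgraph.TensionContinuous M G H f)
    {n : ℕ} (v : Fin (n + 1) → V) (e : Fin (n + 1) → G.Edge)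
    (dir : Fin (n + 1) → Bool)
    (hC : G.IsCircuit v e dir) (hunbal : ¬ BalancedDir M dir) :
    ∃ (m : ℕ) (v' : Fin (m + 1) → W) (e' : Fin (m + 1) → H.Edge)
      (dir' : Fin (m + 1) → Bool),
      H.IsCircuit v' e' dir' ∧ ¬ BalancedDir M dir' ∧
      ∀ i : Fin (m + 1), ∃ j : Fin (n + 1), e' i = f (e j) := by
  by_contra! himage
  obtain ⟨m, hm⟩ := not_forall.mp hunbal
  have hτ : H.IsTensionOn (Set.range (f ∘ e)) fun _ => m := by
    intro k v' e' dir' hC' hS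
    rw [sum_ite_neg_eq_card_sub_card_smul]
    by_contra hne
    obtain ⟨i, hi⟩ := himage k v' e' dir' hC' fun hbal => hne (hbal m)
    obtain ⟨j, hj⟩ := hS i
    exact hi j hj.symm
  obtain ⟨p, hp⟩ := hτ.exists_potential
  apply hm
  rw [← sum_ite_neg_eq_card_sub_card_smul, ← hf _ (Dgraph.isTension_coboundary p) n v e dir hC]
  refine Finset.sum_congr rfl fun i _ => ?_
  rw [Function.comp_apply, hp (f (e i)) ⟨i, rfl⟩]

/-- the image (under an `M`-tension-continuous map) of an
`M`-unbalanced circuit contains an `M`-unbalanced circuit. -/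
theorem image_of_unbalanced_circuit {M : Type} [AddCommGroup M]
    {V W : Type} [Fintype V] [Fintype W]
    (G : Dgraph V) (H : Dgraph W) (f : G.Edge → H.Edge)
    (hf : Dgraph.TensionContinuous M G H f)
    {n : ℕ} (v : Fin (n + 1) → V) (e : Fin (n + 1) → G.Edge)
    (dir : Fin (n + 1) → Bool)
    (hC : G.IsCircuit v e dir) (hunbal : ¬ BalancedDir M dir) :
    ∃ (m : ℕ) (v' : Fin (m + 1) → W) (e' : Fin (m + 1) → H.Edge)
      (dir' : Fin (m + 1) → Bool),
      H.IsCircuit v' e' dir' ∧ ¬ BalancedDir M dir' ∧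
      ∀ i : Fin (m + 1), ∃ j : Fin (n + 1), e' i = f (e j) :=
  image_of_unbalanced_circuit_general G H f hf v e dir hC hunbal
end

section
/- Let g_M(G) denote the length of a shortest M-unbalanced circuit in G (∞ if none exists). If there exists an M-tension-continuous mapping from G to H, then g_M(G) ≥ g_M(H). -/
/-- `g_M(G)`: the length of a shortest `M`-unbalanced circuit of `G`
(`⊤` if there is none). -/
noncomputable def gM (M : Type) [AddCommGroup M] {V : Type} (D : Dgraph V) : ℕ∞ :=
  sInf {N : ℕ∞ | ∃ (n : ℕ) (v : Fin (n + 1) → V) (e : Fin (n + 1) → D.Edge)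
    (dir : Fin (n + 1) → Bool),
    D.IsCircuit v e dir ∧ ¬ BalancedDir M dir ∧ N = (n + 1 : ℕ)}

/-!
Push an `M`-unbalanced circuit `C` of `G` forward along `f`: its signed edge counts form a chain
`z` on `H` with coefficients in `Module.End ℤ M`, a ring in which an integer vanishes exactly when
it kills `M`. Pulling back the potential tensions `ε ↦ p (tgt ε) - p (src ε)` shows that `z` has
zero boundary, and `∑ z ≠ 0` because `C` is unbalanced. No edge of the support of such a cycle ends
alone at a vertex, so the support contains a circuit; if that circuit is balanced, subtracting a
multiple of it deletes an edge from the support without changing `∑ z`. Hence `H` has an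
unbalanced circuit with at most `|C|` edges.
-/

open Finset Matrix

namespace Dgraph

variable {W : Type} {H : Dgraph W}

instance [Finite W] : Finite H.Edge :=
  inferInstanceAs (Finite {p : W × W // H.Adj p.1 p.2})

noncomputable instance [Finite W] : Fintype H.Edge := Fintype.ofFinite _

def Joins (ε : H.Edge) (a b : W) : Prop :=
  src ε = a ∧ tgt ε = b ∨ tgt ε = a ∧ src ε = b

lemma Joins.tgt_eq {ε : H.Edge} {a b : W} (h : Joins ε a b) (ha : src ε = a) : tgt ε = b := by
  rcases h with ⟨-, h⟩ | ⟨h₁, h₂⟩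
  exacts [h, h₁.trans (ha.symm.trans h₂)]

lemma Joins.incident_right {ε : H.Edge} {a b : W} (h : Joins ε a b) : src ε = b ∨ tgt ε = b := by
  rcases h with ⟨-, h⟩ | ⟨-, h⟩
  exacts [Or.inr h, Or.inl h]

lemma Joins.eq_and_eq_or_eq_and_eq {ε : H.Edge} {a b c d : W} (h₁ : Joins ε a b)
    (h₂ : Joins ε c d) : a = c ∧ b = d ∨ a = d ∧ b = c := by
  rcases h₁ with ⟨rfl, rfl⟩ | ⟨rfl, rfl⟩ <;> rcases h₂ with ⟨h₃, h₄⟩ | ⟨h₃, h₄⟩ <;> simp_all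

open Classical in
lemma isClosedWalk_of_joins {n : ℕ} {v : Fin (n + 1) → W} {e : Fin (n + 1) → H.Edge}
    (h : ∀ t, Joins (e t) (v t) (v (t + 1))) :
    H.IsClosedWalk v e (fun t => decide (src (e t) = v t)) := by
  intro t
  simp only [decide_eq_true_eq]
  split_ifs with hs
  · exact ⟨hs, (h t).tgt_eq hs⟩
  · exact (h t).resolve_left fun h' => hs h'.1

lemma exists_nonbacktracking_walk {P : H.Edge → Prop} {ε₀ : H.Edge} (hε₀ : P ε₀)
    (hP : ∀ ε, P ε → ∀ w, src ε = w ∨ tgt ε = w →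
      ∃ ε', P ε' ∧ ε' ≠ ε ∧ (src ε' = w ∨ tgt ε' = w)) :
    ∃ (x : ℕ → W) (y : ℕ → H.Edge), (∀ k, P (y k)) ∧
      (∀ k, Joins (y k) (x k) (x (k + 1))) ∧ ∀ k, y (k + 1) ≠ y k := by
  classical
  have hstep : ∀ p : H.Edge × W, ∃ q : H.Edge × W, P p.1 → (src p.1 = p.2 ∨ tgt p.1 = p.2) →
      P q.1 ∧ q.1 ≠ p.1 ∧ Joins q.1 p.2 q.2 := by
    rintro ⟨ε, w⟩
    by_cases h : P ε ∧ (src ε = w ∨ tgt ε = w)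
    · obtain ⟨ε', hε', hne, hw⟩ := hP ε h.1 w h.2
      refine ⟨(ε', if src ε' = w then tgt ε' else src ε'), fun _ _ => ⟨hε', hne, ?_⟩⟩
      by_cases hs : src ε' = w
      · exact Or.inl ⟨hs, (if_pos hs).symm⟩
      · exact Or.inr ⟨hw.resolve_left hs, (if_neg hs).symm⟩
    · exact ⟨(ε, w), fun h₁ h₂ => (h ⟨h₁, h₂⟩).elim⟩
  choose step hstep using hstep
  set s : ℕ → H.Edge × W := fun k => step^[k] (ε₀, src ε₀)
  have hs_succ : ∀ k, s (k + 1) = step (s k) := fun k => Function.iterate_succ_apply' _ _ _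
  have hs : ∀ k, P (s k).1 ∧ (src (s k).1 = (s k).2 ∨ tgt (s k).1 = (s k).2) := by
    intro k
    induction k with
    | zero => exact ⟨hε₀, Or.inl rfl⟩
    | succ k ih =>
      obtain ⟨hP', -, hj⟩ := hstep (s k) ih.1 ih.2
      rw [hs_succ]
      exact ⟨hP', hj.incident_right⟩
  refine ⟨fun k => (s k).2, fun k => (s (k + 1)).1, fun k => (hs (k + 1)).1, fun k => ?_,
    fun k => ?_⟩
  · have := (hstep (s k) (hs k).1 (hs k).2).2.2
    rwa [← hs_succ] at this
  · have := (hstep (s (k + 1)) (hs (k + 1)).1 (hs (k + 1)).2).2.1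
    rwa [← hs_succ] at this

lemma exists_circuit_of_nonbacktracking_walk [Finite W] {x : ℕ → W} {y : ℕ → H.Edge}
    (hjoin : ∀ k, Joins (y k) (x k) (x (k + 1))) (hback : ∀ k, y (k + 1) ≠ y k) :
    ∃ (n : ℕ) (v : Fin (n + 1) → W) (e : Fin (n + 1) → H.Edge) (dir : Fin (n + 1) → Bool),
      H.IsCircuit v e dir ∧ Function.Injective e ∧ ∀ t, e t ∈ Set.range y := by
  classical
  have hrep : ∃ j, ∃ i < j, x i = x j := by
    obtain ⟨a, b, hab, h⟩ := Finite.exists_ne_map_eq_of_infinite x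
    rcases hab.lt_or_gt with hab | hab
    exacts [⟨b, a, hab, h⟩, ⟨a, b, hab, h.symm⟩]
  obtain ⟨i, hij, hxi⟩ := Nat.find_spec hrep
  set j := Nat.find hrep
  have hinj : ∀ p q, p < j → q < j → x p = x q → p = q := by
    intro p q hp hq hpq
    by_contra hne
    rcases Nat.lt_or_gt_of_ne hne with h | h
    exacts [Nat.find_min hrep hq ⟨p, h, hpq⟩, Nat.find_min hrep hp ⟨q, h, hpq.symm⟩]
  obtain ⟨m, hm⟩ : ∃ m, j = i + m + 1 := ⟨j - i - 1, by omega⟩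
  -- two equal edges would make the segment a circuit of length two that backtracks
  have hedge : ∀ a b, a < b → b ≤ m → y (i + a) ≠ y (i + b) := by
    intro a b hab hbm hy
    have hb := hjoin (i + b)
    rw [← hy] at hb
    rcases (hjoin (i + a)).eq_and_eq_or_eq_and_eq hb with ⟨h, -⟩ | ⟨h₁, h₂⟩
    · have := hinj _ _ (by omega) (by omega) h
      omega
    obtain rfl : b = a + 1 := by
      have := hinj _ _ (by omega) (by omega) h₂
      omega
    obtain rfl : a = 0 := by
      by_cases hlt : i + a + 1 + 1 < j
      · have := hinj _ _ (by omega) hlt h₁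
        omega
      · rw [show i + (a + 1) + 1 = j by omega, ← hxi] at h₁
        have := hinj _ _ (by omega) (by omega) h₁
        omega
    exact hback i hy.symm
  refine ⟨m, fun t => x (i + t), fun t => y (i + t), _, ⟨isClosedWalk_of_joins fun t => ?_, ?_⟩,
    ?_, fun t => ⟨_, rfl⟩⟩
  · have hnext : x (i + ↑(t + 1)) = x (i + t + 1) := by
      rw [Fin.val_add_one]
      split_ifs with ht
      · rw [ht, Fin.val_last, add_zero, ← hm, hxi]
      · rfl
    rw [hnext]
    exact hjoin _
  · intro a b hab
    have := hinj _ _ (by omega) (by omega) hab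
    exact Fin.ext (by omega)
  · intro a b hab
    rcases lt_trichotomy a b with h | h | h
    · exact (hedge a b h (by omega) hab).elim
    · exact h
    · exact (hedge b a h (by omega) hab.symm).elim

section Chain

variable {R : Type*} [Ring R]

def orientSign (b : Bool) : R := if b then 1 else -1

lemma orientSign_mul_self (b : Bool) : orientSign b * orientSign b = (1 : R) := by
  cases b <;> simp [orientSign]

lemma sum_orientSign {n : ℕ} (dir : Fin (n + 1) → Bool) :
    ∑ i, orientSign (dir i) = ((#{i | dir i = true} - #{i | dir i = false} : ℤ) : R) := by
  simp [orientSign, Finset.sum_ite, sub_eq_add_neg]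

variable (R) in
open Classical in
/-- `z ᵥ* H.incMatrix R` is the boundary of the edge chain `z`. -/
noncomputable def incMatrix (H : Dgraph W) : Matrix H.Edge W R :=
  fun ε w => (if tgt ε = w then 1 else 0) - (if src ε = w then 1 else 0)

open Classical in
noncomputable def walkChain {n : ℕ} (e : Fin (n + 1) → H.Edge) (dir : Fin (n + 1) → Bool)
    (ε : H.Edge) : R :=
  ∑ i, if e i = ε then orientSign (dir i) else 0

section walkChain

variable {n : ℕ} {e : Fin (n + 1) → H.Edge} {dir : Fin (n + 1) → Bool}

lemma walkChain_apply_of_injective (he : Function.Injective e) (i : Fin (n + 1)) :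
    walkChain e dir (e i) = (orientSign (dir i) : R) := by
  unfold walkChain
  rw [Finset.sum_eq_single i (fun j _ hj => if_neg (he.ne hj)) (by simp), if_pos rfl]

lemma mem_range_of_walkChain_ne_zero {ε : H.Edge} (h : walkChain e dir ε ≠ (0 : R)) :
    ε ∈ Set.range e := by
  by_contra hε
  exact h (Finset.sum_eq_zero fun i _ => if_neg fun hi => hε ⟨i, hi⟩)

variable [Finite W]

lemma walkChain_dotProduct (c : H.Edge → R) :
    walkChain e dir ⬝ᵥ c = ∑ i, orientSign (dir i) * c (e i) := by
  classical
  simp only [dotProduct, walkChain, Finset.sum_mul, ite_mul, zero_mul]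
  rw [Finset.sum_comm]
  simp

lemma sum_walkChain : ∑ ε, walkChain e dir ε = ∑ i, (orientSign (dir i) : R) := by
  simpa [dotProduct] using walkChain_dotProduct (e := e) (dir := dir) (fun _ => (1 : R))

lemma walkChain_vecMul_incMatrix {v : Fin (n + 1) → W} (hC : H.IsClosedWalk v e dir) :
    walkChain e dir ᵥ* H.incMatrix R = 0 := by
  classical
  ext w
  have hterm : ∀ i, orientSign (dir i) * H.incMatrix R (e i) w =
      (if v (i + 1) = w then 1 else 0) - (if v i = w then 1 else 0) := by
    intro i
    have h := hC i
    unfold orientSign incMatrix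
    split_ifs at h ⊢ <;> simp_all
  rw [vecMul, walkChain_dotProduct]
  simp only [hterm, Finset.sum_sub_distrib, Pi.zero_apply]
  exact sub_eq_zero.mpr
    (Equiv.sum_comp (Equiv.addRight (1 : Fin (n + 1))) fun i => if v i = w then (1 : R) else 0)

end walkChain

variable [Finite W]

lemma exists_ne_incident_of_vecMul_incMatrix_eq_zero {z : H.Edge → R}
    (hz : z ᵥ* H.incMatrix R = 0) {ε : H.Edge} (hε : z ε ≠ 0) (hloop : src ε ≠ tgt ε) {w : W}
    (hw : src ε = w ∨ tgt ε = w) : ∃ ε', z ε' ≠ 0 ∧ ε' ≠ ε ∧ (src ε' = w ∨ tgt ε' = w) := by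
  by_contra! h
  have hw' := congrFun hz w
  rw [vecMul, dotProduct, Finset.sum_eq_single ε (fun ε' _ hne => ?_) (by simp)] at hw'
  · apply hε
    rcases hw with rfl | rfl <;> simpa [incMatrix, hloop, hloop.symm] using hw'
  · by_cases hz' : z ε' = 0
    · rw [hz', zero_mul]
    · simp [incMatrix, h ε' hz' hne]

lemma exists_circuit_of_vecMul_incMatrix_eq_zero {z : H.Edge → R}
    (hz : z ᵥ* H.incMatrix R = 0) {ε₀ : H.Edge} (hε₀ : z ε₀ ≠ 0) :
    ∃ (n : ℕ) (v : Fin (n + 1) → W) (e : Fin (n + 1) → H.Edge) (dir : Fin (n + 1) → Bool),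
      H.IsCircuit v e dir ∧ Function.Injective e ∧ ∀ i, z (e i) ≠ 0 := by
  by_cases hloop : ∃ ε, z ε ≠ 0 ∧ src ε = tgt ε
  · obtain ⟨ε, hε, hsrc⟩ := hloop
    have hsub : ∀ {α : Type} (f : Fin 1 → α), Function.Injective f :=
      fun _ a b _ => Subsingleton.elim a b
    exact ⟨0, fun _ => src ε, fun _ => ε, fun _ => true, ⟨fun _ => ⟨rfl, hsrc.symm⟩, hsub _⟩,
      hsub _, fun _ => hε⟩
  push Not at hloop
  obtain ⟨x, y, hy, hjoin, hback⟩ := exists_nonbacktracking_walk hε₀ fun ε hε _ hw =>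
    exists_ne_incident_of_vecMul_incMatrix_eq_zero hz hε (hloop ε hε) hw
  obtain ⟨n, v, e, dir, hC, he, hrange⟩ := exists_circuit_of_nonbacktracking_walk hjoin hback
  refine ⟨n, v, e, dir, hC, he, fun i => ?_⟩
  obtain ⟨k, hk⟩ := hrange i
  exact hk ▸ hy k

theorem exists_circuit_sum_orientSign_ne_zero (S : Finset H.Edge) (z : H.Edge → R)
    (hzS : ∀ ε, z ε ≠ 0 → ε ∈ S) (hz : z ᵥ* H.incMatrix R = 0) (hsum : ∑ ε, z ε ≠ 0) :
    ∃ (n : ℕ) (v : Fin (n + 1) → W) (e : Fin (n + 1) → H.Edge) (dir : Fin (n + 1) → Bool),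
      H.IsCircuit v e dir ∧ ∑ i, orientSign (dir i) ≠ (0 : R) ∧ n + 1 ≤ #S := by
  classical
  induction S using Finset.strongInduction generalizing z with
  | H S ih =>
  obtain ⟨ε₀, hε₀⟩ : ∃ ε, z ε ≠ 0 := by
    by_contra! h
    exact hsum (Finset.sum_eq_zero fun ε _ => h ε)
  obtain ⟨n, v, e, dir, hC, he, hze⟩ := exists_circuit_of_vecMul_incMatrix_eq_zero hz hε₀
  have hcard : n + 1 ≤ #S := by
    simpa using Finset.card_le_card_of_injOn (s := univ) e (fun i _ => hzS _ (hze i)) he.injOn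
  by_cases hbal : ∑ i, orientSign (dir i) = (0 : R)
  swap
  · exact ⟨n, v, e, dir, hC, hbal, hcard⟩
  -- subtracting a multiple of the balanced circuit removes `e 0` from the support, keeping `∑ z`
  set z' := z - (z (e 0) * orientSign (dir 0)) • walkChain e dir
  have hz'S : ∀ ε, z' ε ≠ 0 → ε ∈ S.erase (e 0) := by
    intro ε hε
    refine Finset.mem_erase.2 ⟨fun h => hε ?_, ?_⟩
    · simp [z', h, walkChain_apply_of_injective he, mul_assoc, orientSign_mul_self]
    · by_contra hεS
      have hzε : z ε = 0 := by_contra fun h => hεS (hzS ε h)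
      have hwε : walkChain e dir ε = (0 : R) := by
        by_contra h
        obtain ⟨i, rfl⟩ := mem_range_of_walkChain_ne_zero h
        exact hεS (hzS _ (hze i))
      simp [z', hzε, hwε] at hε
  obtain ⟨m, v', e', dir', hC', hunbal, hm⟩ :=
    ih _ (Finset.erase_ssubset (hzS _ (hze 0))) z' hz'S
      (by rw [sub_vecMul, smul_vecMul, hz, walkChain_vecMul_incMatrix hC.1, smul_zero, sub_zero])
      (by simpa [z', Finset.sum_sub_distrib, ← Finset.mul_sum, sum_walkChain, hbal] using hsum)
  exact ⟨m, v', e', dir', hC', hunbal, hm.trans (Finset.card_le_card (Finset.erase_subset _ _))⟩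

end Chain

variable {M : Type} [AddCommGroup M]

lemma isTension_potential (p : W → M) :
    H.IsTension fun ε => p (tgt ε) - p (src ε) := by
  intro n v e dir hC
  have hterm : ∀ i, (if dir i then p (tgt (e i)) - p (src (e i))
      else -(p (tgt (e i)) - p (src (e i)))) = p (v (i + 1)) - p (v i) := by
    intro i
    have h := hC.1 i
    split_ifs at h ⊢ <;> rw [h.1, h.2]
    abel
  rw [Finset.sum_congr rfl fun i _ => hterm i, Finset.sum_sub_distrib]
  exact sub_eq_zero.mpr (Equiv.sum_comp (Equiv.addRight (1 : Fin (n + 1))) fun i => p (v i))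

lemma balancedDir_iff {n : ℕ} (dir : Fin (n + 1) → Bool) :
    BalancedDir M dir ↔ ∑ i, orientSign (dir i) = (0 : Module.End ℤ M) := by
  rw [sum_orientSign, LinearMap.ext_iff]
  simp only [Module.End.intCast_apply, LinearMap.zero_apply]
  rfl

lemma walkChain_comp_vecMul_incMatrix [Finite W] {V : Type} {G : Dgraph V}
    {f : G.Edge → H.Edge} (hf : TensionContinuous M G H f) {n : ℕ} {v : Fin (n + 1) → V}
    {e : Fin (n + 1) → G.Edge} {dir : Fin (n + 1) → Bool} (hC : G.IsCircuit v e dir) :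
    walkChain (f ∘ e) dir ᵥ* H.incMatrix (Module.End ℤ M) = 0 := by
  classical
  ext w m
  have := hf _ (isTension_potential (Pi.single w m)) n v e dir hC
  rw [vecMul, walkChain_dotProduct, LinearMap.sum_apply, Pi.zero_apply, LinearMap.zero_apply]
  convert this using 2 with i
  rw [Module.End.mul_apply]
  unfold orientSign incMatrix
  split_ifs <;> simp_all [Pi.single_apply]

end Dgraph

theorem gM_le_of_tensionContinuous_general {M : Type} [AddCommGroup M]
    {V W : Type} [Fintype W]
    (G : Dgraph V) (H : Dgraph W)
    (hex : ∃ f : G.Edge → H.Edge, Dgraph.TensionContinuous M G H f) :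
    gM M H ≤ gM M G := by
  classical
  obtain ⟨f, hf⟩ := hex
  refine le_sInf ?_
  rintro _ ⟨n, v, e, dir, hC, hunbal, rfl⟩
  have hsupp : ∀ ε, Dgraph.walkChain (f ∘ e) dir ε ≠ (0 : Module.End ℤ M) →
      ε ∈ univ.image (f ∘ e) := fun ε hε => by
    obtain ⟨i, rfl⟩ := Dgraph.mem_range_of_walkChain_ne_zero hε
    exact Finset.mem_image_of_mem _ (Finset.mem_univ i)
  obtain ⟨k, v', e', dir', hC', hunbal', hk⟩ :=
    Dgraph.exists_circuit_sum_orientSign_ne_zero _ _ hsupp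
      (Dgraph.walkChain_comp_vecMul_incMatrix hf hC)
      (by rw [Dgraph.sum_walkChain]; exact (Dgraph.balancedDir_iff dir).not.1 hunbal)
  calc gM M H ≤ (k + 1 : ℕ) :=
        sInf_le ⟨k, v', e', dir', hC', (Dgraph.balancedDir_iff dir').not.2 hunbal', rfl⟩
    _ ≤ (n + 1 : ℕ) := by exact_mod_cast hk.trans (Finset.card_image_le.trans (by simp))

/-- if there is an `M`-tension-continuous map from `G` to `H`,
then `g_M(G) ≥ g_M(H)`. -/
theorem gM_le_of_tensionContinuous {M : Type} [AddCommGroup M]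
    {V W : Type} [Fintype V] [Fintype W]
    (G : Dgraph V) (H : Dgraph W)
    (hex : ∃ f : G.Edge → H.Edge, Dgraph.TensionContinuous M G H f) :
    gM M H ≤ gM M G :=
  gM_le_of_tensionContinuous_general G H hex
end

section
/- Let G, H be finite undirected graphs and define Δ(H) to be the graph on the power set P(V(H)) with A adjacent to B iff the symmetric difference A △ B is an edge of H. Then there exists a Z₂-tension-continuous (cut-continuous) mapping from G to H if and only if there exists a graph homomorphism from G to Δ(H). -/
open SimpleGraph

/-- A cut in an undirected graph: the set of edges between `X` and its
complement, for some vertex set `X`. -/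
def IsCut {V : Type} (G : SimpleGraph V) (C : Set G.edgeSet) : Prop :=
  ∃ X : Set V, ∀ e : G.edgeSet, e ∈ C ↔
    ∃ u v : V, (e : Sym2 V) = s(u, v) ∧ ((u ∈ X ∧ v ∉ X) ∨ (u ∉ X ∧ v ∈ X))

/-- A mapping between edge sets is cut-continuous (`ℤ₂`-tension-continuous) if
preimages of cuts are cuts. -/
def CutContinuous {V W : Type} (G : SimpleGraph V) (H : SimpleGraph W)
    (f : G.edgeSet → H.edgeSet) : Prop :=
  ∀ C : Set H.edgeSet, IsCut H C → IsCut G (f ⁻¹' C)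

/-- The graph `Δ(H)` on the power set of `V(H)`: `A` is adjacent to `B` iff
the symmetric difference `A △ B` is an edge of `H`. -/
def Delta {W : Type} (H : SimpleGraph W) : SimpleGraph (Set W) where
  Adj A B := ∃ u v : W, H.Adj u v ∧ symmDiff A B = {u, v}
  symm := by
    constructor
    rintro A B ⟨u, v, huv, hs⟩
    exact ⟨u, v, huv, by rwa [symmDiff_comm]⟩
  loopless := by
    constructor
    rintro A ⟨u, v, huv, hs⟩
    rw [symmDiff_self] at hs
    have : u ∈ (⊥ : Set W) := by rw [hs]; exact Set.mem_insert u {v}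
    exact this.elim

private lemma mem_cut_iff' {V : Type} {X : Set V} {a b : V} {e : Sym2 V}
    (he : e = s(a, b)) :
    (∃ u v : V, e = s(u, v) ∧ ((u ∈ X ∧ v ∉ X) ∨ (u ∉ X ∧ v ∈ X))) ↔
      ((a ∈ X ∧ b ∉ X) ∨ (a ∉ X ∧ b ∈ X)) := by
  subst he
  constructor
  · rintro ⟨u, v, h, hc⟩
    rw [Sym2.eq_iff] at h
    rcases h with ⟨rfl, rfl⟩ | ⟨rfl, rfl⟩ <;> tauto
  · intro hc; exact ⟨a, b, rfl, hc⟩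

noncomputable def chi {W : Type} [Fintype W] (X A : Set W) : ZMod 2 :=
  ∑ w : W, (A ∩ X).indicator (fun _ => 1) w

private lemma chi_symmDiff {W : Type} [Fintype W] (X A B : Set W) :
    chi X (symmDiff A B) = chi X A + chi X B := by
  unfold chi
  rw [← Finset.sum_add_distrib]
  apply Finset.sum_congr rfl
  intro w _
  by_cases hA : w ∈ A <;> by_cases hB : w ∈ B <;> by_cases hX : w ∈ X <;>
    · simp [Set.indicator_apply, Set.mem_symmDiff, hA, hB, hX]
      try decide

private lemma chi_pair {W : Type} [Fintype W] (X : Set W) {a b : W} (hne : a ≠ b) :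
    chi X ({a, b} : Set W) =
      X.indicator (fun _ => 1) a + X.indicator (fun _ => 1) b := by
  unfold chi
  rw [Finset.sum_eq_add_of_mem a b (Finset.mem_univ a) (Finset.mem_univ b) hne
    (fun c _ hc => Set.indicator_of_notMem
      (by simp [Set.mem_insert_iff, hc.1, hc.2]) _)]
  have h : ∀ c : W, c ∈ ({a, b} : Set W) →
      ({a, b} ∩ X).indicator (fun _ => (1 : ZMod 2)) c = X.indicator (fun _ => 1) c := by
    intro c hc
    by_cases hX : c ∈ X <;> simp [Set.indicator_apply, hc, hX]
  rw [h a (by simp), h b (by simp)]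

private lemma indicator_sum_eq_one {W : Type} (X : Set W) (a b : W) :
    X.indicator (fun _ => (1 : ZMod 2)) a + X.indicator (fun _ => 1) b = 1 ↔
      ((a ∈ X ∧ b ∉ X) ∨ (a ∉ X ∧ b ∈ X)) := by
  by_cases hA : a ∈ X <;> by_cases hB : b ∈ X <;>
    · simp [Set.indicator_apply, hA, hB]
      try decide

/-- there is a cut-continuous mapping `G → H` iff there is a
graph homomorphism `G → Δ(H)`. -/
theorem cutContinuous_iff_hom_delta {V W : Type} [Fintype V] [Fintype W]
    (G : SimpleGraph V) (H : SimpleGraph W) :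
    (∃ f : G.edgeSet → H.edgeSet, CutContinuous G H f) ↔
      Nonempty (G →g Delta H) := by
  constructor
  · rintro ⟨f, hf⟩
    -- for every vertex `w` of `H`, the star cut at `w` and its preimage
    set Cw : W → Set H.edgeSet := fun w =>
      {e | ∃ u v : W, (e : Sym2 W) = s(u, v) ∧
        ((u ∈ ({w} : Set W) ∧ v ∉ ({w} : Set W)) ∨
         (u ∉ ({w} : Set W) ∧ v ∈ ({w} : Set W)))} with hCw
    have hcut : ∀ w : W, IsCut H (Cw w) := fun w => ⟨{w}, fun e => Iff.rfl⟩
    have := fun w => hf (Cw w) (hcut w)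
    choose X hX using this
    refine ⟨⟨fun v => {w | v ∈ X w}, ?_⟩⟩
    intro p q hpq
    set e : G.edgeSet := ⟨s(p, q), hpq⟩ with he
    obtain ⟨a, b, hab⟩ : ∃ a b : W, (f e : Sym2 W) = s(a, b) :=
      ⟨(f e : Sym2 W).out.1, (f e : Sym2 W).out.2, (Quot.out_eq _).symm⟩
    have hadj : H.Adj a b := H.mem_edgeSet.1 (hab ▸ (f e).2)
    refine ⟨a, b, hadj, ?_⟩
    ext w
    have h1 : w ∈ symmDiff {w | p ∈ X w} {w | q ∈ X w} ↔
        ((p ∈ X w ∧ q ∉ X w) ∨ (p ∉ X w ∧ q ∈ X w)) := by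
      rw [Set.mem_symmDiff]
      simp only [Set.mem_setOf_eq]
      tauto
    have h2 : e ∈ f ⁻¹' Cw w ↔ ((p ∈ X w ∧ q ∉ X w) ∨ (p ∉ X w ∧ q ∈ X w)) := by
      rw [hX w e, mem_cut_iff' (show (e : Sym2 V) = s(p, q) from rfl)]
    have h3 : e ∈ f ⁻¹' Cw w ↔
        ((a ∈ ({w} : Set W) ∧ b ∉ ({w} : Set W)) ∨
         (a ∉ ({w} : Set W) ∧ b ∈ ({w} : Set W))) := by
      rw [Set.mem_preimage]
      exact mem_cut_iff' hab
    rw [h1, ← h2, h3]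
    simp only [Set.mem_singleton_iff, Set.mem_insert_iff]
    constructor
    · rintro (⟨rfl, -⟩ | ⟨-, rfl⟩) <;> tauto
    · rintro (rfl | rfl)
      · exact Or.inl ⟨rfl, fun h => hadj.ne h.symm⟩
      · exact Or.inr ⟨fun h => hadj.ne h, rfl⟩
  · rintro ⟨φ⟩
    have key : ∀ e : G.edgeSet, ∃ u v : W, H.Adj u v ∧
        symmDiff (φ ((e : Sym2 V).out.1)) (φ ((e : Sym2 V).out.2)) = {u, v} := by
      intro e
      have hadj : G.Adj (e : Sym2 V).out.1 (e : Sym2 V).out.2 := by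
        rw [← SimpleGraph.mem_edgeSet]
        have : s((e : Sym2 V).out.1, (e : Sym2 V).out.2) = (e : Sym2 V) :=
          Quot.out_eq _
        rw [this]
        exact e.2
      exact φ.map_rel hadj
    choose u v hadj hsd using key
    refine ⟨fun e => ⟨s(u e, v e), H.mem_edgeSet.2 (hadj e)⟩, ?_⟩
    rintro C ⟨X, hXC⟩
    refine ⟨{p : V | chi X (φ p) = 1}, ?_⟩
    intro e
    set a := (e : Sym2 V).out.1 with ha
    set b := (e : Sym2 V).out.2 with hb
    have heab : (e : Sym2 V) = s(a, b) := (Quot.out_eq _).symm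
    rw [mem_cut_iff' heab, Set.mem_preimage,
      hXC _, mem_cut_iff' (show ((⟨s(u e, v e), _⟩ : H.edgeSet) : Sym2 W) = s(u e, v e) from rfl),
      ← indicator_sum_eq_one, ← chi_pair X (hadj e).ne, ← hsd e, chi_symmDiff]
    simp only [Set.mem_setOf_eq]
    have hz : ∀ x y : ZMod 2, x + y = 1 ↔ ((x = 1 ∧ ¬ y = 1) ∨ (¬ x = 1 ∧ y = 1)) := by
      decide
    rw [hz]
end

section
/- There is no Z₂-tension-continuous (cut-continuous) mapping from K₅ to K₄; more strongly, if f: E(K₅) → E(H) is cut-continuous with H loopless, then the image f(E(K₅)) induces a graph of chromatic number at least 5. -/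
open SimpleGraph

private def par (x : Fin 3 → Bool) : Bool := xor (x 0) (xor (x 1) (x 2))

private lemma keyB : ∀ x y : Fin 3 → Bool, (Finset.univ.filter fun i => x i ≠ y i).card = 2 →
    x ≠ y ∧ par x = par y := by decide

private lemma keyC : ∀ c : Bool,
    (Finset.univ.filter fun x : Fin 3 → Bool => par x = c).card = 4 := by decide

private lemma keyA : ¬ ∃ g : Fin 5 → Fin 3 → Bool, ∀ a b : Fin 5, a ≠ b →
    (Finset.univ.filter fun i => g a i ≠ g b i).card = 2 := by
  rintro ⟨g, hg⟩
  have h1 : ∀ a b : Fin 5, a ≠ b → g a ≠ g b ∧ par (g a) = par (g b) :=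
    fun a b hab => keyB _ _ (hg a b hab)
  have hinj : Function.Injective g := by
    intro a b hab
    by_contra h
    exact (h1 a b h).1 hab
  have hsub : Finset.univ.image g ⊆
      Finset.univ.filter fun x : Fin 3 → Bool => par x = par (g 0) := by
    intro x hx
    simp only [Finset.mem_image, Finset.mem_univ, true_and] at hx
    obtain ⟨a, rfl⟩ := hx
    simp only [Finset.mem_filter, Finset.mem_univ, true_and]
    by_cases h : a = 0
    · rw [h]
    · exact (h1 a 0 h).2
  have h2 := Finset.card_le_card hsub
  rw [Finset.card_image_of_injective _ hinj, keyC] at h2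
  simp at h2

private lemma key4 : ∀ x y : Fin 4, x ≠ y →
    (Finset.univ.filter fun i : Fin 3 =>
      decide (x = 0 ∨ x = i.succ) ≠ decide (y = 0 ∨ y = i.succ)).card = 2 := by decide

private lemma xor_helper {α : Type*} (X : Set α) {s : Sym2 α} {a b : α} (h : s = s(a,b)) :
    (∃ u v, s = s(u,v) ∧ ((u ∈ X ∧ v ∉ X) ∨ (u ∉ X ∧ v ∈ X))) ↔
      ((a ∈ X ∧ b ∉ X) ∨ (a ∉ X ∧ b ∈ X)) := by
  subst h
  constructor
  · rintro ⟨u, v, huv, hx⟩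
    rw [Sym2.eq_iff] at huv
    rcases huv with ⟨rfl, rfl⟩ | ⟨rfl, rfl⟩ <;> tauto
  · exact fun hx => ⟨a, b, rfl, hx⟩

private lemma abs_lemma : ∀ (p q r s : Prop), ((r ∧ ¬s) ∨ (¬r ∧ s) ↔ (p ∧ ¬q) ∨ (¬p ∧ q)) →
    (¬(p ↔ q) ↔ ¬(r ↔ s)) := by tauto

private lemma main_lemma {W : Type} (H : SimpleGraph W)
    (f : (⊤ : SimpleGraph (Fin 5)).edgeSet → H.edgeSet)
    (hf : CutContinuous ⊤ H f) (c : W → Fin 4)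
    (hc : ∀ (e : (⊤ : SimpleGraph (Fin 5)).edgeSet) (u v : W),
      (↑(f e) : Sym2 W) = s(u, v) → c u ≠ c v) : False := by
  classical
  have hcut : ∀ i : Fin 3, IsCut H {e : H.edgeSet | ∃ u v, (e : Sym2 W) = s(u,v) ∧
      ((u ∈ {w | c w = 0 ∨ c w = i.succ} ∧ v ∉ {w | c w = 0 ∨ c w = i.succ}) ∨
       (u ∉ {w | c w = 0 ∨ c w = i.succ} ∧ v ∈ {w | c w = 0 ∨ c w = i.succ}))} :=
    fun i => ⟨{w | c w = 0 ∨ c w = i.succ}, fun e => Iff.rfl⟩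
  choose Y hY using fun i => hf _ (hcut i)
  refine keyA ⟨fun a i => decide (a ∈ Y i), fun a b hab => ?_⟩
  have hadj : (⊤ : SimpleGraph (Fin 5)).Adj a b := by simpa using hab
  obtain ⟨⟨u, v⟩, huv⟩ := Quot.exists_rep (↑(f ⟨s(a,b), hadj⟩) : Sym2 W)
  have huv' : (↑(f ⟨s(a,b), hadj⟩) : Sym2 W) = s(u, v) := huv.symm
  have hcuv : c u ≠ c v := hc _ u v huv'
  have hmem : ∀ i : Fin 3, (decide (a ∈ Y i) ≠ decide (b ∈ Y i)) ↔
      (decide (c u = 0 ∨ c u = i.succ) ≠ decide (c v = 0 ∨ c v = i.succ)) := by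
    intro i
    have h1 := hY i ⟨s(a,b), hadj⟩
    simp only [Set.mem_preimage, Set.mem_setOf_eq] at h1
    have h2 := ((xor_helper {w | c w = 0 ∨ c w = i.succ} huv').symm.trans h1).trans
      (xor_helper (Y i) rfl)
    simp only [Set.mem_setOf_eq] at h2
    simp only [ne_eq, decide_eq_decide]
    exact abs_lemma _ _ _ _ h2
  have heq : (Finset.univ.filter fun i => (fun a i => decide (a ∈ Y i)) a i ≠
      (fun a i => decide (a ∈ Y i)) b i) =
      (Finset.univ.filter fun i : Fin 3 =>
        decide (c u = 0 ∨ c u = i.succ) ≠ decide (c v = 0 ∨ c v = i.succ)) := by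
    ext i
    simp only [Finset.mem_filter, Finset.mem_univ, true_and]
    exact hmem i
  rw [heq]
  exact key4 _ _ hcuv

/-- there is no cut-continuous mapping `K₅ → K₄`; more strongly,
the image of any cut-continuous mapping out of `K₅` induces a graph of
chromatic number at least 5. -/
theorem no_cutContinuous_K5_K4 :
    (¬ ∃ f : (⊤ : SimpleGraph (Fin 5)).edgeSet → (⊤ : SimpleGraph (Fin 4)).edgeSet,
      CutContinuous ⊤ ⊤ f) ∧
    ∀ (W : Type) (H : SimpleGraph W)
      (f : (⊤ : SimpleGraph (Fin 5)).edgeSet → H.edgeSet),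
      CutContinuous ⊤ H f →
      (5 : ℕ∞) ≤ (SimpleGraph.fromEdgeSet
        (Set.range fun e => ((f e : Sym2 W)))).chromaticNumber := by
  constructor
  · rintro ⟨f, hf⟩
    refine main_lemma ⊤ f hf id fun e u v huv => ?_
    have h := (f e).2
    rw [huv, mem_edgeSet, top_adj] at h
    simpa using h
  · intro W H f hf
    by_contra hlt
    push_neg at hlt
    have h4 : (SimpleGraph.fromEdgeSet
        (Set.range fun e => ((f e : Sym2 W)))).chromaticNumber ≤ (4 : ℕ) := by
      exact Order.le_of_lt_add_one (by exact_mod_cast hlt)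
    rw [chromaticNumber_le_iff_colorable] at h4
    obtain ⟨C⟩ := h4
    refine main_lemma H f hf C fun e u v huv => ?_
    have hne : u ≠ v := by
      have h := (f e).2
      rw [huv, mem_edgeSet] at h
      exact h.ne
    have hadj : (SimpleGraph.fromEdgeSet
        (Set.range fun e => ((f e : Sym2 W)))).Adj u v := by
      rw [fromEdgeSet_adj]
      exact ⟨⟨e, huv⟩, hne⟩
    exact C.valid hadj
end

section
/- Every cut-continuous mapping f: E(K₅) → E(H), H a loopless undirected graph, is induced by an injective graph homomorphism (embedding) K₅ → H, and this homomorphism is uniquely determined. -/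
open SimpleGraph

section Aux

variable {W : Type} {H : SimpleGraph W}
  (f : (⊤ : SimpleGraph (Fin 5)).edgeSet → H.edgeSet)

/-- The image edge of `uv` under `f`. -/
def Fe (u v : Fin 5) (h : u ≠ v) : Sym2 W :=
  (f ⟨s(u, v), by simp [h]⟩ : Sym2 W)

lemma Fe_mem (u v : Fin 5) (h : u ≠ v) : Fe f u v h ∈ H.edgeSet :=
  (f _).2

lemma Fe_symm (u v : Fin 5) (h : u ≠ v) : Fe f u v h = Fe f v u h.symm := by
  exact congrArg (fun e => (f e : Sym2 W)) (Subtype.ext Sym2.eq_swap)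

lemma edge_repr (e : Sym2 W) (he : e ∈ H.edgeSet) :
    ∃ a b : W, a ≠ b ∧ e = s(a, b) := by
  induction e using Sym2.ind with
  | _ a b => exact ⟨a, b, (H.mem_edgeSet.mp he).ne, rfl⟩

lemma edge_ext {e : Sym2 W} (he : e ∈ H.edgeSet) {a b : W} (hab : a ≠ b)
    (ha : a ∈ e) (hb : b ∈ e) : e = s(a, b) := by
  obtain ⟨c, d, hcd, rfl⟩ := edge_repr e he
  rw [Sym2.mem_iff] at ha hb
  rcases ha with rfl | rfl <;> rcases hb with rfl | rfl <;>
    first | exact absurd rfl hab | rfl | exact Sym2.eq_swap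

/-- Separation structure coming from star cuts of `H`. -/
lemma sep (hf : CutContinuous ⊤ H f) (x : W) :
    ∃ χ : Fin 5 → Bool, ∀ u v (h : u ≠ v), (x ∈ Fe f u v h ↔ χ u ≠ χ v) := by
  classical
  have hcut : IsCut H {e : H.edgeSet | x ∈ (e : Sym2 W)} := by
    refine ⟨{x}, fun e => ?_⟩
    obtain ⟨a, b, hab, he⟩ := edge_repr (e : Sym2 W) e.2
    simp only [Set.mem_setOf_eq, he, Sym2.mem_iff, Set.mem_singleton_iff]
    constructor
    · rintro (rfl | rfl)
      · exact ⟨x, b, rfl, Or.inl ⟨rfl, fun hc => hab hc.symm⟩⟩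
      · exact ⟨a, x, rfl, Or.inr ⟨hab, rfl⟩⟩
    · rintro ⟨u, v, huv, hsp⟩
      have hx : x ∈ s(a, b) := by
        rw [huv, Sym2.mem_iff]
        rcases hsp with ⟨h1, -⟩ | ⟨-, h1⟩
        · exact Or.inl h1.symm
        · exact Or.inr h1.symm
      rwa [Sym2.mem_iff] at hx
  obtain ⟨X, hX⟩ := hf _ hcut
  refine ⟨fun i => decide (i ∈ X), fun u v h => ?_⟩
  have key : x ∈ Fe f u v h ↔
      ∃ a b : Fin 5, (s(u, v) : Sym2 (Fin 5)) = s(a, b) ∧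
        ((a ∈ X ∧ b ∉ X) ∨ (a ∉ X ∧ b ∈ X)) := hX ⟨s(u, v), by simp [h]⟩
  rw [key]
  simp only [ne_eq, decide_eq_decide]
  constructor
  · rintro ⟨a, b, hab, hsp⟩
    rw [Sym2.eq_iff] at hab
    rcases hab with ⟨rfl, rfl⟩ | ⟨rfl, rfl⟩ <;> tauto
  · intro hne
    by_cases hu : u ∈ X <;> by_cases hv : v ∈ X
    · tauto
    · exact ⟨u, v, rfl, Or.inl ⟨hu, hv⟩⟩
    · exact ⟨u, v, rfl, Or.inr ⟨hu, hv⟩⟩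
    · tauto

lemma parity (hf : CutContinuous ⊤ H f) {u v w : Fin 5}
    (huv : u ≠ v) (hvw : v ≠ w) (huw : u ≠ w) (x : W) :
    x ∈ Fe f u v huv ↔
      ((x ∈ Fe f v w hvw ∧ x ∉ Fe f u w huw) ∨
       (x ∉ Fe f v w hvw ∧ x ∈ Fe f u w huw)) := by
  obtain ⟨χ, hχ⟩ := sep f hf x
  rw [hχ u v huv, hχ v w hvw, hχ u w huw]
  cases hu : χ u <;> cases hv : χ v <;> cases hw : χ w <;> simp

lemma triangle (hf : CutContinuous ⊤ H f) {u v w : Fin 5}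
    (huv : u ≠ v) (hvw : v ≠ w) (huw : u ≠ w) :
    ∃ a b c : W, a ≠ b ∧ a ≠ c ∧ b ≠ c ∧
      Fe f u v huv = s(a, b) ∧ Fe f v w hvw = s(b, c) ∧
      Fe f u w huw = s(a, c) := by
  obtain ⟨a, b, hab, h1⟩ := edge_repr (Fe f u v huv) (Fe_mem f u v huv)
  have hP := parity f hf huv hvw huw
  have hme2 := Fe_mem f v w hvw
  have hme3 := Fe_mem f u w huw
  have ha : a ∈ Fe f u v huv := by rw [h1]; exact Sym2.mem_mk_left a b
  have hb : b ∈ Fe f u v huv := by rw [h1]; exact Sym2.mem_mk_right a b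
  have hnotboth2 : ¬ (a ∈ Fe f v w hvw ∧ b ∈ Fe f v w hvw) := by
    rintro ⟨ha2, hb2⟩
    have he12 : Fe f v w hvw = s(a, b) := edge_ext hme2 hab ha2 hb2
    obtain ⟨c, d, hcd, h3⟩ := edge_repr (Fe f u w huw) hme3
    have hc3 : c ∈ Fe f u w huw := by rw [h3]; exact Sym2.mem_mk_left c d
    have := hP c
    rw [h1, he12] at this
    tauto
  have hnotboth3 : ¬ (a ∈ Fe f u w huw ∧ b ∈ Fe f u w huw) := by
    rintro ⟨ha3, hb3⟩
    have he13 : Fe f u w huw = s(a, b) := edge_ext hme3 hab ha3 hb3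
    obtain ⟨c, d, hcd, h2⟩ := edge_repr (Fe f v w hvw) hme2
    have hc2 : c ∈ Fe f v w hvw := by rw [h2]; exact Sym2.mem_mk_left c d
    have := hP c
    rw [h1, he13] at this
    tauto
  rcases (hP a).mp ha with ⟨ha2, ha3⟩ | ⟨ha2, ha3⟩ <;>
    rcases (hP b).mp hb with ⟨hb2, hb3⟩ | ⟨hb2, hb3⟩
  · exact absurd ⟨ha2, hb2⟩ hnotboth2
  · -- a ∈ e2, b ∈ e3
    obtain ⟨p, q, hpq, h2⟩ := edge_repr (Fe f v w hvw) hme2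
    have haq : a = p ∨ a = q := by rw [h2, Sym2.mem_iff] at ha2; exact ha2
    -- let c be the other endpoint of e2
    obtain ⟨c, hca, h2'⟩ : ∃ c, c ≠ a ∧ Fe f v w hvw = s(a, c) := by
      rcases haq with rfl | rfl
      · exact ⟨q, fun hc => hpq hc.symm, h2⟩
      · exact ⟨p, fun hc => hpq hc, h2.trans Sym2.eq_swap⟩
    have hcb : c ≠ b := by
      rintro rfl
      exact hb2 (by rw [h2']; exact Sym2.mem_mk_right a c)
    have hc1 : c ∉ Fe f u v huv := by
      rw [h1, Sym2.mem_iff]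
      rintro (rfl | rfl)
      · exact hca rfl
      · exact hcb rfl
    have hc3 : c ∈ Fe f u w huw := by
      have := hP c
      have hc2 : c ∈ Fe f v w hvw := by rw [h2']; exact Sym2.mem_mk_right a c
      tauto
    have he3 : Fe f u w huw = s(b, c) := edge_ext hme3 (Ne.symm hcb) hb3 hc3
    exact ⟨b, a, c, Ne.symm hab, Ne.symm hcb, fun hc => hca hc.symm,
      h1.trans Sym2.eq_swap, h2', he3⟩
  · -- b ∈ e2, a ∈ e3
    obtain ⟨p, q, hpq, h2⟩ := edge_repr (Fe f v w hvw) hme2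
    have hbq : b = p ∨ b = q := by rw [h2, Sym2.mem_iff] at hb2; exact hb2
    obtain ⟨c, hcb, h2'⟩ : ∃ c, c ≠ b ∧ Fe f v w hvw = s(b, c) := by
      rcases hbq with rfl | rfl
      · exact ⟨q, fun hc => hpq hc.symm, h2⟩
      · exact ⟨p, fun hc => hpq hc, h2.trans Sym2.eq_swap⟩
    have hca : c ≠ a := by
      rintro rfl
      exact ha2 (by rw [h2']; exact Sym2.mem_mk_right b c)
    have hc1 : c ∉ Fe f u v huv := by
      rw [h1, Sym2.mem_iff]
      rintro (rfl | rfl)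
      · exact hca rfl
      · exact hcb rfl
    have hc3 : c ∈ Fe f u w huw := by
      have := hP c
      have hc2 : c ∈ Fe f v w hvw := by rw [h2']; exact Sym2.mem_mk_right b c
      tauto
    have he3 : Fe f u w huw = s(a, c) := edge_ext hme3 (Ne.symm hca) ha3 hc3
    exact ⟨a, b, c, hab, Ne.symm hca, Ne.symm hcb, h1, h2', he3⟩
  · exact absurd ⟨ha3, hb3⟩ hnotboth3

lemma no_double (hf : CutContinuous ⊤ H f) {p w1 w2 : Fin 5}
    (h1 : p ≠ w1) (h2 : p ≠ w2) (h12 : w1 ≠ w2) :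
    Fe f p w1 h1 ≠ Fe f p w2 h2 := by
  obtain ⟨a, b, c, hab, hac, hbc, e1, e2, e3⟩ := triangle f hf h1 h12 h2
  intro h
  rw [e1, e3, Sym2.eq_iff] at h
  rcases h with ⟨-, h⟩ | ⟨h, h'⟩
  · exact hbc h
  · exact hab h'.symm

lemma bool_classify : ∀ χ : Fin 5 → Bool,
    (∀ i j : Fin 5, χ i = χ j) ∨
    (∃ s : Fin 5, ∀ p q : Fin 5, p ≠ q → ((χ p ≠ χ q) ↔ (s = p ∨ s = q))) ∨
    (∃ u z : Fin 5, u ≠ z ∧ χ u = χ z ∧ ∀ i, i ≠ u → i ≠ z → χ i ≠ χ u) := by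
  decide

lemma others : ∀ u z : Fin 5, u ≠ z →
    ∃ v1 v2 v3 : Fin 5, v1 ≠ v2 ∧ v1 ≠ v3 ∧ v2 ≠ v3 ∧
      v1 ≠ u ∧ v1 ≠ z ∧ v2 ≠ u ∧ v2 ≠ z ∧ v3 ≠ u ∧ v3 ≠ z := by
  decide

lemma two_others : ∀ u : Fin 5, ∃ v w : Fin 5, v ≠ w ∧ u ≠ v ∧ u ≠ w := by decide

lemma third_vertex : ∀ u v : Fin 5, ∃ w, w ≠ u ∧ w ≠ v := by decide

lemma bool_eq_of_ne {a b c : Bool} (h1 : a ≠ c) (h2 : b ≠ c) : a = b := by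
  cases a <;> cases b <;> cases c <;> simp_all

/-- The preimage cut pattern of a star cut cannot be a `2-3` cut. -/
lemma not_two_two (hf : CutContinuous ⊤ H f) (x : W) (χ : Fin 5 → Bool)
    (hχ : ∀ u v (h : u ≠ v), (x ∈ Fe f u v h ↔ χ u ≠ χ v))
    (u z : Fin 5) (huz : u ≠ z) (he : χ u = χ z)
    (ho : ∀ i, i ≠ u → i ≠ z → χ i ≠ χ u) : False := by
  have hxuz : x ∉ Fe f u z huz := fun hm => ((hχ u z huz).mp hm) he
  have step1 : ∀ (v : Fin 5) (hvu : v ≠ u) (hvz : v ≠ z),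
      ∃ α, α ≠ x ∧ Fe f u v hvu.symm = s(α, x) ∧ α ∈ Fe f u z huz := by
    intro v hvu hvz
    have hxuv : x ∈ Fe f u v hvu.symm :=
      (hχ u v hvu.symm).mpr fun hc => ho v hvu hvz hc.symm
    have hxvz : x ∈ Fe f v z hvz :=
      (hχ v z hvz).mpr fun hc => ho v hvu hvz (hc.trans he.symm)
    obtain ⟨a, b, c, hab, hac, hbc, e1, e2, e3⟩ := triangle f hf hvu.symm hvz huz
    have hxb : x = b := by
      rw [e1, Sym2.mem_iff] at hxuv
      rw [e3, Sym2.mem_iff] at hxuz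
      rcases hxuv with rfl | rfl
      · exact absurd (Or.inl rfl) hxuz
      · rfl
    subst hxb
    refine ⟨a, hab, e1, ?_⟩
    rw [e3]
    exact Sym2.mem_mk_left a c
  have step2 : ∀ (v v' : Fin 5) (hvu : v ≠ u) (hvz : v ≠ z)
      (hv'u : v' ≠ u) (hv'z : v' ≠ z) (hvv' : v ≠ v')
      (α α' : W) (hα : α ≠ x) (hα' : α' ≠ x)
      (hFv : Fe f u v hvu.symm = s(α, x)) (hFv' : Fe f u v' hv'u.symm = s(α', x)),
      α ≠ α' := by
    intro v v' hvu hvz hv'u hv'z hvv' α α' hα hα' hFv hFv'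
    obtain ⟨a, b, c, hab, hac, hbc, e1, e2, e3⟩ := triangle f hf hvu hv'u.symm hvv'
    -- e1 : Fe f v u = s(a,b), e2 : Fe f u v' = s(b,c), e3 : Fe f v v' = s(a,c)
    have hxvv' : x ∉ Fe f v v' hvv' := fun hm =>
      ((hχ v v' hvv').mp hm) (bool_eq_of_ne (ho v hvu hvz) (ho v' hv'u hv'z))
    have hxvu : x ∈ Fe f v u hvu := by
      rw [Fe_symm, hFv]
      exact Sym2.mem_mk_right α x
    have hxuv' : x ∈ Fe f u v' hv'u.symm := by
      rw [hFv']
      exact Sym2.mem_mk_right α' x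
    have hxb : x = b := by
      rw [e1, Sym2.mem_iff] at hxvu
      rw [e3, Sym2.mem_iff] at hxvv'
      rcases hxvu with rfl | rfl
      · exact absurd (Or.inl rfl) hxvv'
      · rfl
    subst hxb
    have haα : a = α := by
      have : Fe f v u hvu = s(α, x) := by rw [Fe_symm]; exact hFv
      rw [e1, Sym2.eq_iff] at this
      rcases this with ⟨h1, -⟩ | ⟨h1, h2⟩
      · exact h1
      · exact absurd h2.symm hα
    have hcα' : c = α' := by
      rw [hFv', Sym2.eq_iff] at e2
      rcases e2 with ⟨h1, h2⟩ | ⟨h1, h2⟩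
      · exact absurd h1 hα'
      · exact h1.symm
    rw [← haα, ← hcα']
    exact hac
  obtain ⟨v1, v2, v3, h12, h13, h23, h1u, h1z, h2u, h2z, h3u, h3z⟩ :=
    others u z huz
  obtain ⟨α1, hα1, hF1, hm1⟩ := step1 v1 h1u h1z
  obtain ⟨α2, hα2, hF2, hm2⟩ := step1 v2 h2u h2z
  obtain ⟨α3, hα3, hF3, hm3⟩ := step1 v3 h3u h3z
  have d12 : α1 ≠ α2 := step2 v1 v2 h1u h1z h2u h2z h12 α1 α2 hα1 hα2 hF1 hF2
  have d13 : α1 ≠ α3 := step2 v1 v3 h1u h1z h3u h3z h13 α1 α3 hα1 hα3 hF1 hF3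
  have d23 : α2 ≠ α3 := step2 v2 v3 h2u h2z h3u h3z h23 α2 α3 hα2 hα3 hF2 hF3
  obtain ⟨p, q, hpq, hez⟩ := edge_repr (Fe f u z huz) (Fe_mem f u z huz)
  rw [hez, Sym2.mem_iff] at hm1 hm2 hm3
  rcases hm1 with rfl | rfl <;> rcases hm2 with h | h <;> rcases hm3 with h' | h' <;>
    simp_all

/-- `x` is the image of `u`: it lies on exactly the images of edges at `u`. -/
def IsStar (x : W) (u : Fin 5) : Prop :=
  ∀ p q (h : p ≠ q), x ∈ Fe f p q h ↔ (u = p ∨ u = q)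

lemma star_of_mem (hf : CutContinuous ⊤ H f) {u v : Fin 5} (h : u ≠ v)
    {x : W} (hx : x ∈ Fe f u v h) :
    ∃ s : Fin 5, IsStar f x s ∧ (s = u ∨ s = v) := by
  obtain ⟨χ, hχ⟩ := sep f hf x
  rcases bool_classify χ with hconst | ⟨s, hs⟩ | ⟨u0, z, huz, he, ho⟩
  · exact absurd (hconst u v) ((hχ u v h).mp hx)
  · refine ⟨s, fun p q hpq => (hχ p q hpq).trans (hs p q hpq), ?_⟩
    exact (hs u v h).mp ((hχ u v h).mp hx)
  · exact (not_two_two f hf x χ hχ u0 z huz he ho).elim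

lemma isStar_right_unique (hf : CutContinuous ⊤ H f) {x y : W} {u : Fin 5}
    (hx : IsStar f x u) (hy : IsStar f y u) : x = y := by
  by_contra hxy
  obtain ⟨v, w, hvw, huv, huw⟩ := two_others u
  have h1 : Fe f u v huv = s(x, y) :=
    edge_ext (Fe_mem f u v huv) hxy ((hx u v huv).mpr (Or.inl rfl))
      ((hy u v huv).mpr (Or.inl rfl))
  have h2 : Fe f u w huw = s(x, y) :=
    edge_ext (Fe_mem f u w huw) hxy ((hx u w huw).mpr (Or.inl rfl))
      ((hy u w huw).mpr (Or.inl rfl))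
  exact no_double f hf huv huw hvw (h1.trans h2.symm)

lemma isStar_left_unique (hf : CutContinuous ⊤ H f) {x : W} {u v : Fin 5}
    (huv : u ≠ v) (hx : IsStar f x u) (hy : IsStar f x v) : False := by
  obtain ⟨w, hwu, hwv⟩ := third_vertex u v
  have h1 : x ∈ Fe f u w (Ne.symm hwu) := (hx u w (Ne.symm hwu)).mpr (Or.inl rfl)
  rcases (hy u w (Ne.symm hwu)).mp h1 with h | h
  · exact huv h.symm
  · exact hwv h.symm

lemma key (hf : CutContinuous ⊤ H f) (u v : Fin 5) (h : u ≠ v) :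
    ∃ a b : W, Fe f u v h = s(a, b) ∧ IsStar f a u ∧ IsStar f b v := by
  obtain ⟨a, b, hab, heq⟩ := edge_repr _ (Fe_mem f u v h)
  have hamem : a ∈ Fe f u v h := by rw [heq]; exact Sym2.mem_mk_left a b
  have hbmem : b ∈ Fe f u v h := by rw [heq]; exact Sym2.mem_mk_right a b
  obtain ⟨sa, hsa, hsa'⟩ := star_of_mem f hf h hamem
  obtain ⟨sb, hsb, hsb'⟩ := star_of_mem f hf h hbmem
  have hne : sa ≠ sb := fun e => hab (isStar_right_unique f hf hsa (e ▸ hsb))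
  rcases hsa' with rfl | rfl <;> rcases hsb' with rfl | rfl
  · exact absurd rfl hne
  · exact ⟨a, b, heq, hsa, hsb⟩
  · exact ⟨b, a, heq.trans Sym2.eq_swap, hsb, hsa⟩
  · exact absurd rfl hne

end Aux

/-- every cut-continuous mapping `f : E(K₅) → E(H)` (`H` loopless,
i.e. a simple graph) is induced by a unique injective graph homomorphism
(embedding) `K₅ → H`. -/
theorem cutContinuous_K5_induced (W : Type) (H : SimpleGraph W)
    (f : (⊤ : SimpleGraph (Fin 5)).edgeSet → H.edgeSet)
    (hf : CutContinuous ⊤ H f) :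
    ∃! g : Fin 5 → W, Function.Injective g ∧
      (∀ u v : Fin 5, u ≠ v → H.Adj (g u) (g v)) ∧
      ∀ (u v : Fin 5) (h : (⊤ : SimpleGraph (Fin 5)).Adj u v),
        (f ⟨s(u, v), (⊤ : SimpleGraph (Fin 5)).mem_edgeSet.mpr h⟩ : Sym2 W) =
          s(g u, g v) := by
  classical
  have hstar : ∀ u : Fin 5, ∃ x : W, IsStar f x u := by
    intro u
    obtain ⟨v, w, hvw, huv, huw⟩ := two_others u
    obtain ⟨a, b, heq, hsa, hsb⟩ := key f hf u v huv
    exact ⟨a, hsa⟩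
  choose g hg using hstar
  have hind : ∀ (u v : Fin 5) (h : u ≠ v), Fe f u v h = s(g u, g v) := by
    intro u v h
    obtain ⟨a, b, heq, hsa, hsb⟩ := key f hf u v h
    have ha : a = g u := isStar_right_unique f hf hsa (hg u)
    have hb : b = g v := isStar_right_unique f hf hsb (hg v)
    rw [ha, hb] at heq
    exact heq
  have hinj : Function.Injective g := by
    intro u v he
    by_contra hne
    exact isStar_left_unique f hf hne (hg u) (he ▸ hg v)
  refine ⟨g, ⟨hinj, ?_, ?_⟩, ?_⟩
  · intro u v huv
    have hm := Fe_mem f u v huv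
    rw [hind u v huv] at hm
    exact H.mem_edgeSet.mp hm
  · intro u v h
    have h' : u ≠ v := by simpa using h
    exact hind u v h'
  · rintro g' ⟨hinj', -, hind'⟩
    funext u
    obtain ⟨v, w, hvw, huv, huw⟩ := two_others u
    have e1 : Fe f u v huv = s(g' u, g' v) := hind' u v (by simpa using huv)
    have e2 : Fe f u w huw = s(g' u, g' w) := hind' u w (by simpa using huw)
    rw [hind u v huv] at e1
    rw [hind u w huw] at e2
    rw [Sym2.eq_iff] at e1 e2
    rcases e1 with ⟨h1, -⟩ | ⟨h1a, h1b⟩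
    · exact h1.symm
    · rcases e2 with ⟨h2, -⟩ | ⟨h2a, h2b⟩
      · exact h2.symm
      · exact absurd (hinj' (h1a.symm.trans h2a)) hvw
end

section
/- For n ≥ 5 and m ≥ 1, there exists a cut-continuous mapping from K_{n+1} to K_n if and only if there is a graph homomorphism K_{n+1} → K_n; in particular there is no cut-continuous mapping K_{n+1} → K_n, so K₅ ≺ K₆ ≺ K₇ ≺ ⋯ is a strictly increasing chain in the cut-continuous order. -/
open SimpleGraph
set_option maxHeartbeats 1000000

lemma edge_rep {V : Type} (e : (⊤ : SimpleGraph V).edgeSet) :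
    ∃ x y : V, x ≠ y ∧ (e : Sym2 V) = s(x, y) := by
  obtain ⟨z, hz⟩ := e
  induction z using Sym2.ind with
  | _ x y => exact ⟨x, y, by simpa using hz, rfl⟩

lemma cond_iff {V : Type} (X : Set V) (u v : V) (z : Sym2 V) (h : z = s(u, v)) :
    (∃ a b : V, z = s(a, b) ∧ ((a ∈ X ∧ b ∉ X) ∨ (a ∉ X ∧ b ∈ X))) ↔
      ((u ∈ X ∧ v ∉ X) ∨ (u ∉ X ∧ v ∈ X)) := by
  subst h
  constructor
  · rintro ⟨a, b, hab, h2⟩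
    rw [Sym2.eq_iff] at hab
    rcases hab with ⟨rfl, rfl⟩ | ⟨rfl, rfl⟩ <;> tauto
  · intro h
    exact ⟨u, v, rfl, h⟩

def edg {m : ℕ} (a b : Fin m) (h : a ≠ b) : (⊤ : SimpleGraph (Fin m)).edgeSet :=
  ⟨s(a, b), by simpa using h⟩

lemma edg_comm {m : ℕ} (a b : Fin m) (h : a ≠ b) : edg a b h = edg b a h.symm :=
  Subtype.ext Sym2.eq_swap

lemma parity_s12 {n : ℕ}
    (f : (⊤ : SimpleGraph (Fin (n + 1))).edgeSet → (⊤ : SimpleGraph (Fin n)).edgeSet)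
    (hf : CutContinuous ⊤ ⊤ f) (a b c : Fin (n + 1))
    (hab : a ≠ b) (hbc : b ≠ c) (hac : a ≠ c) (w : Fin n) :
    ((w ∈ (↑(f (edg a b hab)) : Sym2 (Fin n))) ↔
      ((w ∈ (↑(f (edg b c hbc)) : Sym2 (Fin n))) ↔
        ¬ (w ∈ (↑(f (edg a c hac)) : Sym2 (Fin n))))) := by
  have hC : IsCut (⊤ : SimpleGraph (Fin n)) {e | w ∈ (e : Sym2 (Fin n))} := by
    refine ⟨{w}, fun e => ?_⟩
    obtain ⟨x, y, hxy, hrep⟩ := edge_rep e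
    rw [Set.mem_setOf_eq, cond_iff {w} x y _ hrep, hrep, Sym2.mem_iff]
    simp only [Set.mem_singleton_iff]
    constructor
    · rintro (rfl | rfl)
      · exact Or.inl ⟨rfl, fun h => hxy h.symm⟩
      · exact Or.inr ⟨fun h => hxy h, rfl⟩
    · rintro (⟨rfl, -⟩ | ⟨-, rfl⟩)
      · exact Or.inl rfl
      · exact Or.inr rfl
  obtain ⟨X, hX⟩ := hf _ hC
  have h1 := hX (edg a b hab)
  have h2 := hX (edg b c hbc)
  have h3 := hX (edg a c hac)
  rw [cond_iff X a b (↑(edg a b hab)) rfl] at h1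
  rw [cond_iff X b c (↑(edg b c hbc)) rfl] at h2
  rw [cond_iff X a c (↑(edg a c hac)) rfl] at h3
  simp only [Set.mem_preimage, Set.mem_setOf_eq] at h1 h2 h3
  rw [h1, h2, h3]
  generalize (a ∈ X) = A
  generalize (b ∈ X) = B
  generalize (c ∈ X) = D
  clear hX hC h1 h2 h3 hf f
  tauto

private lemma logic1 {P Q : Prop} (h : P ↔ (P ↔ ¬Q)) (hq : Q) : False := by tauto

private lemma logic2 {P1 P2 P3 : Prop} (h : P1 ↔ (P2 ↔ ¬P3))
    (hc : (P1 ∧ ¬P3) ∨ (¬P1 ∧ P3)) : P2 := by tauto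

private lemma logic3 {P1 P2 P3 : Prop} (h : P1 ↔ (P2 ↔ ¬P3))
    (h1 : P1) (h2 : P2) (h3 : P3) : False := by tauto

lemma imgs_ne {n : ℕ}
    (f : (⊤ : SimpleGraph (Fin (n + 1))).edgeSet → (⊤ : SimpleGraph (Fin n)).edgeSet)
    (hf : CutContinuous ⊤ ⊤ f) (a b c : Fin (n + 1))
    (hab : a ≠ b) (hbc : b ≠ c) (hac : a ≠ c) :
    f (edg a b hab) ≠ f (edg b c hbc) := by
  intro h
  obtain ⟨x, y, hxy, hrep⟩ := edge_rep (f (edg a c hac))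
  have h1 := parity_s12 f hf a b c hab hbc hac x
  rw [h] at h1
  exact logic1 h1 (hrep ▸ Sym2.mem_mk_left x y)

lemma imgs_meet {n : ℕ}
    (f : (⊤ : SimpleGraph (Fin (n + 1))).edgeSet → (⊤ : SimpleGraph (Fin n)).edgeSet)
    (hf : CutContinuous ⊤ ⊤ f) (a b c : Fin (n + 1))
    (hab : a ≠ b) (hbc : b ≠ c) (hac : a ≠ c) :
    ∃ w : Fin n, w ∈ (↑(f (edg a b hab)) : Sym2 (Fin n)) ∧
      w ∈ (↑(f (edg a c hac)) : Sym2 (Fin n)) := by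
  by_contra hcon
  push_neg at hcon
  obtain ⟨p, q, hpq, hA⟩ := edge_rep (f (edg a b hab))
  obtain ⟨r, s, hrs, hC⟩ := edge_rep (f (edg a c hac))
  obtain ⟨x, y, hxy, hB⟩ := edge_rep (f (edg b c hbc))
  have hpA : p ∈ (↑(f (edg a b hab)) : Sym2 (Fin n)) := hA ▸ Sym2.mem_mk_left _ _
  have hqA : q ∈ (↑(f (edg a b hab)) : Sym2 (Fin n)) := hA ▸ Sym2.mem_mk_right _ _
  have hrC : r ∈ (↑(f (edg a c hac)) : Sym2 (Fin n)) := hC ▸ Sym2.mem_mk_left _ _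
  have hsC : s ∈ (↑(f (edg a c hac)) : Sym2 (Fin n)) := hC ▸ Sym2.mem_mk_right _ _
  have hpC := hcon p hpA
  have hqC := hcon q hqA
  have hrA : ¬ r ∈ (↑(f (edg a b hab)) : Sym2 (Fin n)) := fun h => hcon r h hrC
  have hsA : ¬ s ∈ (↑(f (edg a b hab)) : Sym2 (Fin n)) := fun h => hcon s h hsC
  have hpB := logic2 (parity_s12 f hf a b c hab hbc hac p) (Or.inl ⟨hpA, hpC⟩)
  have hqB := logic2 (parity_s12 f hf a b c hab hbc hac q) (Or.inl ⟨hqA, hqC⟩)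
  have hrB := logic2 (parity_s12 f hf a b c hab hbc hac r) (Or.inr ⟨hrA, hrC⟩)
  have hsB := logic2 (parity_s12 f hf a b c hab hbc hac s) (Or.inr ⟨hsA, hsC⟩)
  rw [hB, Sym2.mem_iff] at hpB hqB hrB hsB
  rw [hC, Sym2.mem_iff] at hpC hqC
  clear hcon hA hB hC hf f hpA hqA hrC hsC hrA hsA
  rcases hpB with rfl | rfl <;> rcases hqB with rfl | rfl <;>
    rcases hrB with rfl | rfl <;> rcases hsB with rfl | rfl <;> tauto

lemma exists_notMem_finset {n : ℕ} (hn : 5 ≤ n) (s : Finset (Fin (n + 1)))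
    (hs : s.card ≤ 5) : ∃ x, x ∉ s := by
  by_contra h
  push_neg at h
  have h2 : (Finset.univ : Finset (Fin (n + 1))).card ≤ s.card :=
    Finset.card_le_card (fun x _ => h x)
  rw [Finset.card_univ, Fintype.card_fin] at h2
  omega

lemma noCC (n : ℕ) (hn : 5 ≤ n) :
    ¬ ∃ f : (⊤ : SimpleGraph (Fin (n + 1))).edgeSet → (⊤ : SimpleGraph (Fin n)).edgeSet,
        CutContinuous ⊤ ⊤ f := by
  rintro ⟨f, hf⟩
  have hex := exists_notMem_finset hn
  have key : ∀ v : Fin (n + 1), ∃ p : Fin n, ∀ x, ∀ h : v ≠ x,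
      p ∈ (↑(f (edg v x h)) : Sym2 (Fin n)) := by
    intro v
    obtain ⟨x1, hx1⟩ := hex {v} (by simp)
    obtain ⟨x2, hx2⟩ := hex {v, x1} (le_trans (Finset.card_insert_le _ _) (by simp))
    simp only [Finset.mem_insert, Finset.mem_singleton, not_or] at hx1 hx2
    have hvx1 : v ≠ x1 := fun h => hx1 h.symm
    have hvx2 : v ≠ x2 := fun h => hx2.1 h.symm
    have hx12 : x1 ≠ x2 := fun h => hx2.2 h.symm
    obtain ⟨p, hp1, hp2⟩ := imgs_meet f hf v x1 x2 hvx1 hx12 hvx2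
    refine ⟨p, fun x hvx => ?_⟩
    by_cases hxx1 : x = x1
    · subst hxx1; exact hp1
    by_cases hxx2 : x = x2
    · subst hxx2; exact hp2
    by_contra hpE3
    obtain ⟨q1, hq1E3, hq1E1⟩ := imgs_meet f hf v x x1 hvx hxx1 hvx1
    obtain ⟨q2, hq2E3, hq2E2⟩ := imgs_meet f hf v x x2 hvx hxx2 hvx2
    have hq1p : q1 ≠ p := fun h => hpE3 (h ▸ hq1E3)
    have hq2p : q2 ≠ p := fun h => hpE3 (h ▸ hq2E3)
    have hE1 : (↑(f (edg v x1 hvx1)) : Sym2 (Fin n)) = s(p, q1) :=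
      (Sym2.mem_and_mem_iff hq1p.symm).mp ⟨hp1, hq1E1⟩
    have hE2 : (↑(f (edg v x2 hvx2)) : Sym2 (Fin n)) = s(p, q2) :=
      (Sym2.mem_and_mem_iff hq2p.symm).mp ⟨hp2, hq2E2⟩
    have hq12 : q1 ≠ q2 := by
      intro h
      subst h
      have hne := imgs_ne f hf x1 v x2 hvx1.symm hvx2 hx12
      rw [edg_comm x1 v hvx1.symm] at hne
      exact hne (Subtype.ext (hE1.trans hE2.symm))
    have hE3 : (↑(f (edg v x hvx)) : Sym2 (Fin n)) = s(q1, q2) :=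
      (Sym2.mem_and_mem_iff hq12).mp ⟨hq1E3, hq2E3⟩
    obtain ⟨y, hy⟩ := hex {v, x1, x2, x} (by
      have h1 := Finset.card_insert_le v ({x1, x2, x} : Finset (Fin (n + 1)))
      have h2 := Finset.card_insert_le x1 ({x2, x} : Finset (Fin (n + 1)))
      have h3 := Finset.card_insert_le x2 ({x} : Finset (Fin (n + 1)))
      simp only [Finset.card_singleton] at h1 h2 h3
      omega)
    simp only [Finset.mem_insert, Finset.mem_singleton, not_or] at hy
    obtain ⟨hyv, hyx1, hyx2, hyx⟩ := hy
    have hvy : v ≠ y := fun h => hyv h.symm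
    have hne41 : f (edg v y hvy) ≠ f (edg v x1 hvx1) := by
      have t := imgs_ne f hf y v x1 (fun h => hyv h) hvx1 hyx1
      rw [edg_comm y v] at t
      exact t
    have hne42 : f (edg v y hvy) ≠ f (edg v x2 hvx2) := by
      have t := imgs_ne f hf y v x2 (fun h => hyv h) hvx2 hyx2
      rw [edg_comm y v] at t
      exact t
    have hne43 : f (edg v y hvy) ≠ f (edg v x hvx) := by
      have t := imgs_ne f hf y v x (fun h => hyv h) hvx hyx
      rw [edg_comm y v] at t
      exact t
    by_cases hpE4 : p ∈ (↑(f (edg v y hvy)) : Sym2 (Fin n))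
    · obtain ⟨r, hr4, hr3⟩ := imgs_meet f hf v y x hvy (fun h => hyx h) hvx
      rw [hE3, Sym2.mem_iff] at hr3
      rcases hr3 with rfl | rfl
      · exact hne41 (Subtype.ext
          (((Sym2.mem_and_mem_iff hq1p.symm).mp ⟨hpE4, hr4⟩).trans hE1.symm))
      · exact hne42 (Subtype.ext
          (((Sym2.mem_and_mem_iff hq2p.symm).mp ⟨hpE4, hr4⟩).trans hE2.symm))
    · obtain ⟨r1, hr14, hr11⟩ := imgs_meet f hf v y x1 hvy (fun h => hyx1 h) hvx1
      rw [hE1, Sym2.mem_iff] at hr11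
      rcases hr11 with rfl | rfl
      · exact hpE4 hr14
      obtain ⟨r2, hr24, hr22⟩ := imgs_meet f hf v y x2 hvy (fun h => hyx2 h) hvx2
      rw [hE2, Sym2.mem_iff] at hr22
      rcases hr22 with rfl | rfl
      · exact hpE4 hr24
      exact hne43 (Subtype.ext
        (((Sym2.mem_and_mem_iff hq12).mp ⟨hr14, hr24⟩).trans hE3.symm))
  choose φ hφ using key
  have hinj : Function.Injective φ := by
    intro u v h
    by_contra huv
    obtain ⟨w, hw⟩ := hex {u, v} (le_trans (Finset.card_insert_le _ _) (by simp))
    simp only [Finset.mem_insert, Finset.mem_singleton, not_or] at hw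
    have huw : u ≠ w := fun hh => hw.1 hh.symm
    have hvw : v ≠ w := fun hh => hw.2 hh.symm
    have h1 : φ u ∈ (↑(f (edg u v huv)) : Sym2 (Fin n)) := hφ u v huv
    have h2 : φ u ∈ (↑(f (edg v w hvw)) : Sym2 (Fin n)) := by
      rw [h]; exact hφ v w hvw
    have h3 : φ u ∈ (↑(f (edg u w huw)) : Sym2 (Fin n)) := hφ u w huw
    exact logic3 (parity_s12 f hf u v w huv hvw huw (φ u)) h1 h2 h3
  have hcard := Fintype.card_le_of_injective φ hinj
  simp only [Fintype.card_fin] at hcard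
  omega

/-- for `n ≥ 5` a cut-continuous mapping `K_{n+1} → K_n` exists
iff a homomorphism exists; in particular there is no cut-continuous mapping
`K_{n+1} → K_n`, while there is one `K_n → K_{n+1}`, so `K₅ ≺ K₆ ≺ ⋯` is a
strictly increasing chain in the cut-continuous order. -/
theorem complete_graphs_cc_chain (n : ℕ) (hn : 5 ≤ n) :
    ((∃ f : (⊤ : SimpleGraph (Fin (n + 1))).edgeSet → (⊤ : SimpleGraph (Fin n)).edgeSet,
        CutContinuous ⊤ ⊤ f) ↔
      Nonempty ((⊤ : SimpleGraph (Fin (n + 1))) →g (⊤ : SimpleGraph (Fin n)))) ∧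
    (¬ ∃ f : (⊤ : SimpleGraph (Fin (n + 1))).edgeSet → (⊤ : SimpleGraph (Fin n)).edgeSet,
        CutContinuous ⊤ ⊤ f) ∧
    (∃ f : (⊤ : SimpleGraph (Fin n)).edgeSet → (⊤ : SimpleGraph (Fin (n + 1))).edgeSet,
        CutContinuous ⊤ ⊤ f) := by
  have noHom : ¬ Nonempty ((⊤ : SimpleGraph (Fin (n + 1))) →g (⊤ : SimpleGraph (Fin n))) := by
    rintro ⟨g⟩
    have hginj : Function.Injective g := by
      intro u v h
      by_contra huv
      have h2 := g.map_adj (show (⊤ : SimpleGraph (Fin (n + 1))).Adj u v by simpa using huv)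
      rw [top_adj] at h2
      exact h2 h
    have hcard := Fintype.card_le_of_injective g hginj
    simp only [Fintype.card_fin] at hcard
    omega
  have hmem : ∀ e : (⊤ : SimpleGraph (Fin n)).edgeSet,
      Sym2.map Fin.castSucc (↑e : Sym2 (Fin n)) ∈ (⊤ : SimpleGraph (Fin (n + 1))).edgeSet := by
    intro e
    obtain ⟨x, y, hxy, hrep⟩ := edge_rep e
    rw [hrep, Sym2.map_pair_eq]
    simp [Fin.castSucc_inj, hxy]
  refine ⟨⟨fun h => absurd h (noCC n hn), fun h => absurd h noHom⟩, noCC n hn, ?_⟩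
  refine ⟨fun e => ⟨Sym2.map Fin.castSucc ↑e, hmem e⟩, ?_⟩
  rintro C ⟨X, hX⟩
  refine ⟨Fin.castSucc ⁻¹' X, fun e => ?_⟩
  obtain ⟨x, y, hxy, hrep⟩ := edge_rep e
  have h1 := hX ⟨Sym2.map Fin.castSucc ↑e, hmem e⟩
  rw [cond_iff X (Fin.castSucc x) (Fin.castSucc y) _ (by
    show Sym2.map Fin.castSucc (↑e : Sym2 (Fin n)) = _
    rw [hrep, Sym2.map_pair_eq])] at h1
  rw [cond_iff (Fin.castSucc ⁻¹' X) x y (↑e) hrep]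
  exact h1
end

section
/- If a mapping f: E(G) → E(H) between finite directed graphs is Z_n-tension-continuous for infinitely many positive integers n, then f is Z-tension-continuous. -/
/-- if `f` is `ℤ/n`-tension-continuous for infinitely many
positive integers `n`, then `f` is `ℤ`-tension-continuous. -/
theorem tensionContinuous_int_of_infinite {V W : Type} [Fintype V] [Fintype W]
    (G : Dgraph V) (H : Dgraph W) (f : G.Edge → H.Edge)
    (h : {n : ℕ | 0 < n ∧ Dgraph.TensionContinuous (ZMod n) G H f}.Infinite) :
    Dgraph.TensionContinuous ℤ G H f := by
  intro τ hτ n v e dir hc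
  set S : ℤ := ∑ i, (if dir i then (τ ∘ f) (e i) else -(τ ∘ f) (e i)) with hS
  -- For each n in the set, n divides S
  have key : ∀ m ∈ {n : ℕ | 0 < n ∧ Dgraph.TensionContinuous (ZMod n) G H f},
      (m : ℤ) ∣ S := by
    intro m hm
    obtain ⟨-, hmtc⟩ := hm
    have hcast : H.IsTension (fun x => ((τ x : ℤ) : ZMod m)) := by
      intro k v' e' dir' hc'
      have := hτ k v' e' dir' hc'
      have : ((∑ i, (if dir' i then τ (e' i) else -τ (e' i)) : ℤ) : ZMod m) = 0 := by
        rw [this]; simp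
      rw [Int.cast_sum] at this
      simpa using this
    have := hmtc _ hcast n v e dir hc
    rw [← ZMod.intCast_zmod_eq_zero_iff_dvd]
    rw [hS, Int.cast_sum]
    simpa using this
  by_contra hSne
  -- the set is bounded by S.natAbs, contradiction with infiniteness
  have hbdd : {n : ℕ | 0 < n ∧ Dgraph.TensionContinuous (ZMod n) G H f} ⊆
      Set.Iic S.natAbs := by
    intro m hm
    have hdvd := key m hm
    have hmpos := hm.1
    have : m ≤ S.natAbs := by
      have := Int.natAbs_dvd_natAbs.mpr hdvd
      simpa using Nat.le_of_dvd (Int.natAbs_pos.mpr hSne) this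
    exact this
  exact h (Set.Finite.subset (Set.finite_Iic _) hbdd)
end

section
/- For a mapping f: E(G) → E(H) between finite directed graphs, the set TT(f) = { n ≥ 1 : f is Z_n-tension-continuous } is closed under divisors and under least common multiples: if a ∈ TT(f) and b | a then b ∈ TT(f), and if a, b ∈ TT(f) then lcm(a,b) ∈ TT(f). Consequently, if TT(f) is finite it is exactly the set of divisors of its maximum element. -/
namespace TTaux
open Dgraph

lemma isTension_comp {X M N : Type} [AddCommGroup M] [AddCommGroup N]
    (φ : M →+ N) {D : Dgraph X} {τ : D.Edge → M} (hτ : D.IsTension τ) :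
    D.IsTension (φ ∘ τ) := by
  intro n v e dir hc
  have h := hτ n v e dir hc
  have h2 : φ (∑ i, (if dir i then τ (e i) else -τ (e i))) = 0 := by rw [h]; simp
  rw [map_sum] at h2
  simpa [apply_ite φ] using h2

lemma tc_of_injective {V W M N : Type} {G : Dgraph V} {H : Dgraph W} {f : G.Edge → H.Edge}
    [AddCommGroup M] [AddCommGroup N]
    (φ : M →+ N) (hφ : Function.Injective φ)
    (h : TensionContinuous N G H f) : TensionContinuous M G H f := by
  intro τ hτ n v e dir hc
  have h2 := h (φ ∘ τ) (isTension_comp φ hτ) n v e dir hc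
  apply hφ
  rw [map_sum, map_zero]
  simpa [apply_ite φ] using h2

lemma tc_prod {V W M N : Type} {G : Dgraph V} {H : Dgraph W} {f : G.Edge → H.Edge}
    [AddCommGroup M] [AddCommGroup N]
    (hM : TensionContinuous M G H f) (hN : TensionContinuous N G H f) :
    TensionContinuous (M × N) G H f := by
  intro τ hτ n v e dir hc
  have h1 := hM ((AddMonoidHom.fst M N) ∘ τ) (isTension_comp _ hτ) n v e dir hc
  have h2 := hN ((AddMonoidHom.snd M N) ∘ τ) (isTension_comp _ hτ) n v e dir hc
  have hfst : (∑ i, (if dir i then (τ ∘ f) (e i) else -(τ ∘ f) (e i))).1 = 0 := by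
    rw [Prod.fst_sum]
    simpa [apply_ite Prod.fst] using h1
  have hsnd : (∑ i, (if dir i then (τ ∘ f) (e i) else -(τ ∘ f) (e i))).2 = 0 := by
    rw [Prod.snd_sum]
    simpa [apply_ite Prod.snd] using h2
  exact Prod.ext hfst hsnd

/-- An injective additive hom `ZMod b →+ ZMod a` when `b ∣ a`, `0 < b`. -/
lemma exists_zmod_embedding {a b : ℕ} (ha : 1 ≤ a) (hb : 1 ≤ b) (hba : b ∣ a) :
    ∃ φ : ZMod b →+ ZMod a, Function.Injective φ := by
  haveI : NeZero a := ⟨Nat.one_le_iff_ne_zero.mp ha⟩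
  haveI : NeZero b := ⟨Nat.one_le_iff_ne_zero.mp hb⟩
  obtain ⟨k, hk⟩ := hba
  have hk0 : k ≠ 0 := by
    rintro rfl
    simp [hk] at ha
  set g : ℤ →+ ZMod a := zmultiplesHom (ZMod a) ((k : ℕ) : ZMod a) with hg
  have hgb : g (b : ℤ) = 0 := by
    have : ((b : ℤ) • ((k : ℕ) : ZMod a)) = (((b * k : ℕ) : ZMod a)) := by
      rw [zsmul_eq_mul]; push_cast; ring
    simp only [hg, zmultiplesHom_apply, this, ← hk, ZMod.natCast_self]
  refine ⟨ZMod.lift b ⟨g, hgb⟩, ?_⟩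
  rw [injective_iff_map_eq_zero]
  intro x hx
  have hxeq : (((x.val : ℕ) : ℤ) : ZMod b) = x := by
    push_cast
    exact ZMod.natCast_rightInverse x
  have hx2 : g ((x.val : ℕ) : ℤ) = 0 := by
    rw [← hxeq, ZMod.lift_coe] at hx
    exact hx
  have hx3 : (((x.val * k : ℕ)) : ZMod a) = 0 := by
    have heq : ((x.val : ℤ) • ((k : ℕ) : ZMod a)) = (((x.val * k : ℕ) : ZMod a)) := by
      rw [zsmul_eq_mul]; push_cast; ring
    rw [hg, zmultiplesHom_apply] at hx2
    rwa [heq] at hx2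
  have hdvd : a ∣ x.val * k := (ZMod.natCast_eq_zero_iff _ _).mp hx3
  rw [hk] at hdvd
  have hbx : b ∣ x.val := (Nat.mul_dvd_mul_iff_right (Nat.pos_of_ne_zero hk0)).mp hdvd
  have hv0 : x.val = 0 := Nat.eq_zero_of_dvd_of_lt hbx x.val_lt
  exact (ZMod.val_eq_zero x).mp hv0


lemma exists_zmod_lcm_embedding {a b : ℕ} (ha : 1 ≤ a) (hb : 1 ≤ b) :
    ∃ ψ : ZMod (Nat.lcm a b) →+ ZMod a × ZMod b, Function.Injective ψ := by
  have ha0 : a ≠ 0 := Nat.one_le_iff_ne_zero.mp ha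
  have hb0 : b ≠ 0 := Nat.one_le_iff_ne_zero.mp hb
  haveI : NeZero a := ⟨ha0⟩
  haveI : NeZero b := ⟨hb0⟩
  haveI : NeZero (Nat.lcm a b) := ⟨Nat.lcm_ne_zero ha0 hb0⟩
  refine ⟨((ZMod.castHom (Nat.dvd_lcm_left a b) (ZMod a)).toAddMonoidHom).prod
          ((ZMod.castHom (Nat.dvd_lcm_right a b) (ZMod b)).toAddMonoidHom), ?_⟩
  rw [injective_iff_map_eq_zero]
  intro x hx
  have hxeq : ((x.val : ℕ) : ZMod (Nat.lcm a b)) = x := ZMod.natCast_rightInverse x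
  rw [Prod.ext_iff] at hx
  obtain ⟨hx1, hx2⟩ := hx
  have h1 : ((x.val : ℕ) : ZMod a) = 0 := by
    rw [← map_natCast (ZMod.castHom (Nat.dvd_lcm_left a b) (ZMod a)) x.val, hxeq]
    exact hx1
  have h2 : ((x.val : ℕ) : ZMod b) = 0 := by
    rw [← map_natCast (ZMod.castHom (Nat.dvd_lcm_right a b) (ZMod b)) x.val, hxeq]
    exact hx2
  have d1 : a ∣ x.val := (ZMod.natCast_eq_zero_iff _ _).mp h1
  have d2 : b ∣ x.val := (ZMod.natCast_eq_zero_iff _ _).mp h2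
  have dl : Nat.lcm a b ∣ x.val := Nat.lcm_dvd d1 d2
  have hv0 : x.val = 0 := Nat.eq_zero_of_dvd_of_lt dl x.val_lt
  exact (ZMod.val_eq_zero x).mp hv0

end TTaux

/-- `TT(f) = {n ≥ 1 : f is ℤ/n-tension-continuous}` is closed
under divisors and under lcm; consequently, a finite `TT(f)` is exactly the set
of divisors of its maximum (= its supremum). -/
theorem TTf_divisors_lcm {V W : Type} [Fintype V] [Fintype W]
    (G : Dgraph V) (H : Dgraph W) (f : G.Edge → H.Edge) :
    (∀ a ∈ {n : ℕ | 1 ≤ n ∧ Dgraph.TensionContinuous (ZMod n) G H f},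
      ∀ b : ℕ, 1 ≤ b → b ∣ a →
        b ∈ {n : ℕ | 1 ≤ n ∧ Dgraph.TensionContinuous (ZMod n) G H f}) ∧
    (∀ a ∈ {n : ℕ | 1 ≤ n ∧ Dgraph.TensionContinuous (ZMod n) G H f},
      ∀ b ∈ {n : ℕ | 1 ≤ n ∧ Dgraph.TensionContinuous (ZMod n) G H f},
        Nat.lcm a b ∈ {n : ℕ | 1 ≤ n ∧ Dgraph.TensionContinuous (ZMod n) G H f}) ∧
    ({n : ℕ | 1 ≤ n ∧ Dgraph.TensionContinuous (ZMod n) G H f}.Finite →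
      {n : ℕ | 1 ≤ n ∧ Dgraph.TensionContinuous (ZMod n) G H f} =
        {b : ℕ | 1 ≤ b ∧
          b ∣ sSup {n : ℕ | 1 ≤ n ∧ Dgraph.TensionContinuous (ZMod n) G H f}}) := by
  set S := {n : ℕ | 1 ≤ n ∧ Dgraph.TensionContinuous (ZMod n) G H f} with hS
  have hdiv : ∀ a ∈ S, ∀ b : ℕ, 1 ≤ b → b ∣ a → b ∈ S := by
    rintro a ⟨ha1, ha2⟩ b hb1 hba
    obtain ⟨φ, hφ⟩ := TTaux.exists_zmod_embedding ha1 hb1 hba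
    exact ⟨hb1, TTaux.tc_of_injective φ hφ ha2⟩
  have hlcm : ∀ a ∈ S, ∀ b ∈ S, Nat.lcm a b ∈ S := by
    rintro a ⟨ha1, ha2⟩ b ⟨hb1, hb2⟩
    obtain ⟨ψ, hψ⟩ := TTaux.exists_zmod_lcm_embedding ha1 hb1
    exact ⟨Nat.one_le_iff_ne_zero.mpr
        (Nat.lcm_ne_zero (Nat.one_le_iff_ne_zero.mp ha1) (Nat.one_le_iff_ne_zero.mp hb1)),
      TTaux.tc_of_injective ψ hψ (TTaux.tc_prod ha2 hb2)⟩
  refine ⟨hdiv, hlcm, ?_⟩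
  intro hfin
  have h1S : (1 : ℕ) ∈ S :=
    ⟨le_refl 1, fun τ _ n v e dir hc => Subsingleton.elim _ _⟩
  have hne : S.Nonempty := ⟨1, h1S⟩
  have hbdd : BddAbove S := hfin.bddAbove
  have hmax : sSup S ∈ S := Nat.sSup_mem hne hbdd
  ext b
  constructor
  · intro hbS
    refine ⟨hbS.1, ?_⟩
    have hl := hlcm b hbS (sSup S) hmax
    have hle : Nat.lcm b (sSup S) ≤ sSup S := le_csSup hbdd hl
    have hge : sSup S ≤ Nat.lcm b (sSup S) :=
      Nat.le_of_dvd hl.1 (Nat.dvd_lcm_right _ _)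
    have heq : Nat.lcm b (sSup S) = sSup S := le_antisymm hle hge
    rw [← heq]
    exact Nat.dvd_lcm_left _ _
  · rintro ⟨hb1, hbdvd⟩
    exact hdiv (sSup S) hmax b hb1 hbdvd
end

section
/- Let A, B be nonempty finite sets of positive integers, n a positive integer, G the disjoint union of directed cycles C⃗_a for a ∈ A, and H the disjoint union of directed cycles C⃗_b for b ∈ B. Then there exists a Z_n-tension-continuous mapping from G to H if and only if every a ∈ A lies in the integer cone of B ∪ {n}, i.e., a is a nonnegative integer combination of elements of B and n. -/
/-- The disjoint union of the consistently oriented cycles `C⃗_a`, `a ∈ A`: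
vertex `(a, i)` with `a ∈ A`, `i < a`, and an edge from `(a, i)` to
`(a, (i+1) % a)`. -/
def dirCycles (A : Finset ℕ) : Dgraph (ℕ × ℕ) :=
  ⟨fun p q => p.1 ∈ A ∧ p.2 < p.1 ∧ q.1 = p.1 ∧ q.2 = (p.2 + 1) % p.1⟩

open Finset Dgraph

section Aux

variable {M : Type} [AddCommGroup M]

open Classical in
/-- Extend an edge function to all vertex pairs, by zero. -/
noncomputable def extE {V : Type} (D : Dgraph V) (τ : D.Edge → M) (p : V × V) : M :=
  if h : D.Adj p.1 p.2 then τ ⟨p, h⟩ else 0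

lemma extE_pos {V : Type} (D : Dgraph V) (τ : D.Edge → M) (p : V × V)
    (h : D.Adj p.1 p.2) : extE D τ p = τ ⟨p, h⟩ := by
  unfold extE; exact dif_pos h

/-- The `i % b`-th edge of the cycle `C⃗_b`. -/
def cyE (S : Finset ℕ) (b : ℕ) (hb : b ∈ S) (h0 : 0 < b) (i : ℕ) : (dirCycles S).Edge :=
  ⟨((b, i % b), (b, (i % b + 1) % b)), hb, Nat.mod_lt i h0, rfl, rfl⟩

lemma cyE_val {S : Finset ℕ} {b : ℕ} (hb : b ∈ S) (h0 : 0 < b) {i : ℕ} (hi : i < b) :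
    (cyE S b hb h0 i).1 = ((b, i), (b, (i + 1) % b)) := by
  simp [cyE, Nat.mod_eq_of_lt hi]

lemma tau_cyE {S : Finset ℕ} {b : ℕ} (hb : b ∈ S) (h0 : 0 < b) {i : ℕ} (hi : i < b)
    (τ : (dirCycles S).Edge → M) :
    τ (cyE S b hb h0 i) = extE (dirCycles S) τ ((b, i), (b, (i + 1) % b)) := by
  have h : (dirCycles S).Adj (b, i) (b, (i + 1) % b) := ⟨hb, hi, rfl, rfl⟩
  rw [extE_pos _ _ _ h]
  congr 1
  exact Subtype.ext (cyE_val hb h0 hi)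

lemma sum_cycle_eq_zero (S : Finset ℕ) (τ : (dirCycles S).Edge → M)
    (h : (dirCycles S).IsTension τ) {b : ℕ} (hb : b ∈ S) (h0 : 0 < b) :
    ∑ i ∈ range b, extE (dirCycles S) τ ((b, i), (b, (i + 1) % b)) = 0 := by
  obtain ⟨m, rfl⟩ : ∃ m, b = m + 1 := ⟨b - 1, by omega⟩
  have hc := h m (fun i => (m + 1, i.val)) (fun i => cyE S (m + 1) hb h0 i.val)
    (fun _ => true) ?_
  · rw [← hc]
    rw [← Fin.sum_univ_eq_sum_range
      (fun i => extE (dirCycles S) τ ((m + 1, i), (m + 1, (i + 1) % (m + 1)))) (m + 1)]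
    refine Finset.sum_congr rfl fun i _ => ?_
    rw [if_pos rfl]
    exact (tau_cyE hb h0 i.isLt τ).symm
  · constructor
    · intro i
      rw [if_pos rfl]
      constructor
      · show (m + 1, i.val % (m + 1)) = (m + 1, i.val)
        rw [Nat.mod_eq_of_lt i.isLt]
      · show (m + 1, (i.val % (m + 1) + 1) % (m + 1)) = (m + 1, ((i + 1 : Fin (m + 1))).val)
        have hv : ((i + 1 : Fin (m + 1))).val = (i.val + 1) % (m + 1) := by
          rw [Fin.val_add, Fin.val_one', Nat.add_mod_mod]
        rw [hv, Nat.mod_add_mod]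
    · intro i j hij
      exact Fin.ext (congrArg Prod.snd hij)

lemma isTension_of_potential {V : Type} (D : Dgraph V) (θ : V → M) (τ : D.Edge → M)
    (h : ∀ e, τ e = θ (tgt e) - θ (src e)) : D.IsTension τ := by
  intro n v e dir hc
  have hw := hc.1
  have key : ∀ i, (if dir i then τ (e i) else -τ (e i)) = θ (v (i + 1)) - θ (v i) := by
    intro i
    have hwi := hw i
    cases hdir : dir i with
    | true =>
      rw [hdir] at hwi
      rw [if_pos rfl] at hwi ⊢
      rw [h, hwi.1, hwi.2]
    | false =>
      rw [hdir] at hwi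
      rw [if_neg (by simp)] at hwi ⊢
      rw [h, hwi.1, hwi.2]
      abel
  rw [Finset.sum_congr rfl fun i _ => key i, Finset.sum_sub_distrib]
  rw [Fintype.sum_equiv (Equiv.addRight (1 : Fin (n + 1))) (fun i => θ (v (i + 1)))
    (fun i => θ (v i)) (fun i => rfl)]
  exact sub_self _

lemma isTension_iff (S : Finset ℕ) (hpos : ∀ s ∈ S, 0 < s) (τ : (dirCycles S).Edge → M) :
    (dirCycles S).IsTension τ ↔
      ∀ b ∈ S, ∑ i ∈ range b, extE (dirCycles S) τ ((b, i), (b, (i + 1) % b)) = 0 := by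
  constructor
  · intro h b hb
    exact sum_cycle_eq_zero S τ h hb (hpos b hb)
  · intro hs
    apply isTension_of_potential (dirCycles S)
      (fun p => ∑ j ∈ range p.2, extE (dirCycles S) τ ((p.1, j), (p.1, (j + 1) % p.1)))
    rintro ⟨⟨⟨b0, i⟩, ⟨b, q2⟩⟩, hb, hi, h1, h2⟩
    dsimp only at hb hi h1 h2
    subst h1; subst h2
    show τ _ = (∑ j ∈ range ((i + 1) % b), extE (dirCycles S) τ ((b, j), (b, (j + 1) % b)))
      - ∑ j ∈ range i, extE (dirCycles S) τ ((b, j), (b, (j + 1) % b))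
    have hadj : (dirCycles S).Adj (b, i) (b, (i + 1) % b) := ⟨hb, hi, rfl, rfl⟩
    rw [← extE_pos (dirCycles S) τ ((b, i), (b, (i + 1) % b)) hadj]
    rcases Nat.lt_or_ge (i + 1) b with hlt | hge
    · conv_rhs => rw [Nat.mod_eq_of_lt hlt]
      rw [Finset.sum_range_succ]
      abel
    · have heq : i + 1 = b := by omega
      subst heq
      have hs' := hs (i + 1) hb
      rw [Finset.sum_range_succ] at hs'
      rw [Nat.mod_self] at hs' ⊢
      rw [Finset.range_zero, Finset.sum_empty, zero_sub]
      exact eq_neg_of_add_eq_zero_right hs'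

end Aux
section Construct

lemma exists_good_map (B : Finset ℕ) (hB : B.Nonempty) (hBpos : ∀ b ∈ B, 0 < b)
    {n : ℕ} (hn : 0 < n) (a : ℕ)
    (h : ∃ c : ℕ → ℕ, ∃ k : ℕ, a = (∑ b ∈ B, c b * b) + k * n) :
    ∃ g : ℕ → (dirCycles B).Edge, ∀ τ : (dirCycles B).Edge → ZMod n,
      (∀ b ∈ B, ∑ i ∈ range b, extE (dirCycles B) τ ((b, i), (b, (i + 1) % b)) = 0) →
      ∑ i ∈ range a, τ (g i) = 0 := by
  revert h
  induction a using Nat.strong_induction_on with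
  | _ a IH =>
  intro h
  obtain ⟨c, k, hck⟩ := h
  obtain ⟨b0, hb0⟩ := hB
  have e0 : (dirCycles B).Edge := cyE B b0 hb0 (hBpos b0 hb0) 0
  rcases Nat.eq_zero_or_pos a with rfl | ha
  · exact ⟨fun _ => e0, fun τ _ => by simp⟩
  rcases Nat.eq_zero_or_pos k with rfl | hk
  · -- k = 0, a = ∑ c b * b > 0
    have hex : ∃ b ∈ B, c b * b ≠ 0 := by
      by_contra hcon
      push_neg at hcon
      have h0 : ∑ b ∈ B, c b * b = 0 := Finset.sum_eq_zero hcon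
      omega
    obtain ⟨b, hbB, hbne⟩ := hex
    have hbpos : 0 < b := hBpos b hbB
    have hcb : 0 < c b := Nat.pos_of_ne_zero (Nat.mul_ne_zero_iff.mp hbne).1
    have hX : b ≤ c b * b := Nat.le_mul_of_pos_left b hcb
    have hle : c b * b ≤ ∑ b' ∈ B, c b' * b' :=
      Finset.single_le_sum (f := fun b' => c b' * b') (fun _ _ => Nat.zero_le _) hbB
    have hble : b ≤ a := by omega
    have e1 : ∑ b' ∈ B, c b' * b' = c b * b + ∑ b' ∈ B.erase b, c b' * b' :=
      (Finset.add_sum_erase _ _ hbB).symm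
    have e2 : ∑ b' ∈ B, (Function.update c b (c b - 1)) b' * b'
        = (c b - 1) * b + ∑ b' ∈ B.erase b, c b' * b' := by
      rw [← Finset.add_sum_erase _ (fun b' => (Function.update c b (c b - 1)) b' * b') hbB]
      congr 1
      · rw [Function.update_self]
      · exact Finset.sum_congr rfl fun x hx => by
          rw [Function.update_of_ne (Finset.ne_of_mem_erase hx)]
    have hcb1 : (c b - 1) * b = c b * b - b := by rw [Nat.sub_mul, one_mul]
    obtain ⟨a', rfl⟩ : ∃ a', a = a' + b := ⟨a - b, by omega⟩
    have hdec : a' = (∑ b' ∈ B, (Function.update c b (c b - 1)) b' * b') + 0 * n := by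
      rw [e2, hcb1]; omega
    obtain ⟨g', hg'⟩ := IH a' (by omega) ⟨_, 0, hdec⟩
    refine ⟨fun i => if i < a' then g' i else cyE B b hbB hbpos (i - a'),
      fun τ hτ => ?_⟩
    rw [Finset.sum_range_add]
    have h1 : ∑ i ∈ range a',
        τ (if i < a' then g' i else cyE B b hbB hbpos (i - a'))
        = ∑ i ∈ range a', τ (g' i) :=
      Finset.sum_congr rfl fun i hi => by rw [if_pos (mem_range.mp hi)]
    have h2 : ∑ i ∈ range b,
        τ (if a' + i < a' then g' (a' + i) else cyE B b hbB hbpos (a' + i - a'))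
        = ∑ i ∈ range b, extE (dirCycles B) τ ((b, i), (b, (i + 1) % b)) := by
      refine Finset.sum_congr rfl fun i hi => ?_
      rw [if_neg (by omega), Nat.add_sub_cancel_left]
      exact tau_cyE hbB hbpos (mem_range.mp hi) τ
    rw [h1, h2, hg' τ hτ, hτ b hbB, add_zero]
  · -- k > 0
    have hnn : n ≤ k * n := Nat.le_mul_of_pos_left n hk
    have hkn : (k - 1) * n = k * n - n := by rw [Nat.sub_mul, one_mul]
    obtain ⟨a', rfl⟩ : ∃ a', a = a' + n := ⟨a - n, by omega⟩
    have hdec : a' = (∑ b ∈ B, c b * b) + (k - 1) * n := by rw [hkn]; omega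
    obtain ⟨g', hg'⟩ := IH a' (by omega) ⟨c, k - 1, hdec⟩
    refine ⟨fun i => if i < a' then g' i else e0, fun τ hτ => ?_⟩
    rw [Finset.sum_range_add]
    have h1 : ∑ i ∈ range a', τ (if i < a' then g' i else e0)
        = ∑ i ∈ range a', τ (g' i) :=
      Finset.sum_congr rfl fun i hi => by rw [if_pos (mem_range.mp hi)]
    have h2 : ∑ i ∈ range n, τ (if a' + i < a' then g' (a' + i) else e0)
        = ∑ _i ∈ range n, τ e0 :=
      Finset.sum_congr rfl fun i hi => by rw [if_neg (by omega)]
    rw [h1, h2, hg' τ hτ, Finset.sum_const, card_range, zero_add, nsmul_eq_mul,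
      ZMod.natCast_self, zero_mul]

lemma arith_decomp (B : Finset ℕ) (n a : ℕ) (m : ℕ → ℕ → ℕ)
    (h1 : a = ∑ b ∈ B, ∑ j ∈ range b, m b j)
    (h2 : ∀ b ∈ B, ∀ j < b, ((m b j : ZMod n)) = ((m b 0 : ZMod n))) :
    ∃ c : ℕ → ℕ, ∃ k : ℕ, a = (∑ b ∈ B, c b * b) + k * n := by
  refine ⟨fun b => m b 0 % n, ∑ b ∈ B, ∑ j ∈ range b, m b j / n, ?_⟩
  have key : ∀ b ∈ B, ∑ j ∈ range b, m b j
      = (m b 0 % n) * b + (∑ j ∈ range b, m b j / n) * n := by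
    intro b hb
    have hmod : ∀ j ∈ range b, m b j % n = m b 0 % n := fun j hj =>
      (ZMod.natCast_eq_natCast_iff _ _ _).mp (h2 b hb j (mem_range.mp hj))
    calc ∑ j ∈ range b, m b j
        = ∑ j ∈ range b, (m b j % n + m b j / n * n) :=
          Finset.sum_congr rfl fun j _ => (Nat.mod_add_div' _ _).symm
      _ = (∑ j ∈ range b, m b j % n) + (∑ j ∈ range b, m b j / n) * n := by
          rw [Finset.sum_add_distrib, Finset.sum_mul]
      _ = (m b 0 % n) * b + (∑ j ∈ range b, m b j / n) * n := by
          rw [Finset.sum_congr rfl hmod, Finset.sum_const, card_range, smul_eq_mul,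
            mul_comm]
  calc a = ∑ b ∈ B, ∑ j ∈ range b, m b j := h1
    _ = ∑ b ∈ B, ((m b 0 % n) * b + (∑ j ∈ range b, m b j / n) * n) :=
        Finset.sum_congr rfl key
    _ = (∑ b ∈ B, (m b 0 % n) * b) + (∑ b ∈ B, ∑ j ∈ range b, m b j / n) * n := by
        rw [Finset.sum_add_distrib, ← Finset.sum_mul]

end Construct
/-- there is a `ℤ/n`-tension-continuous mapping from
`⋃_{a ∈ A} C⃗_a` to `⋃_{b ∈ B} C⃗_b` iff every `a ∈ A` lies in the integer
cone of `B ∪ {n}`. -/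
theorem cycles_tensionContinuous_iff_cone (A B : Finset ℕ)
    (hA : A.Nonempty) (hB : B.Nonempty)
    (hApos : ∀ a ∈ A, 0 < a) (hBpos : ∀ b ∈ B, 0 < b)
    (n : ℕ) (hn : 0 < n) :
    (∃ f : (dirCycles A).Edge → (dirCycles B).Edge,
      Dgraph.TensionContinuous (ZMod n) (dirCycles A) (dirCycles B) f) ↔
    ∀ a ∈ A, ∃ (c : ℕ → ℕ) (k : ℕ), a = (∑ b ∈ B, c b * b) + k * n := by
  constructor
  · rintro ⟨f, hf⟩ a ha
    have h0a : 0 < a := hApos a ha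
    classical
    set m : ℕ → ℕ → ℕ := fun b j =>
      ((range a).filter fun i => (f (cyE A a ha h0a i)).1.1 = (b, j)).card with hm
    refine arith_decomp B n a m ?_ ?_
    · -- a = ∑∑ m
      have hmem : ∀ i ∈ range a,
          (⟨(f (cyE A a ha h0a i)).1.1.1, (f (cyE A a ha h0a i)).1.1.2⟩ : Σ _ : ℕ, ℕ)
            ∈ B.sigma fun b => range b := by
        intro i _
        have hE := (f (cyE A a ha h0a i)).2
        exact Finset.mem_sigma.mpr ⟨hE.1, mem_range.mpr hE.2.1⟩
      have hcard := Finset.card_eq_sum_card_fiberwise hmem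
      rw [card_range] at hcard
      rw [hcard, Finset.sum_sigma]
      refine Finset.sum_congr rfl fun b hb => Finset.sum_congr rfl fun j hj => ?_
      rw [hm]
      congr 1
      apply Finset.filter_congr
      intro i hi
      constructor
      · intro h
        rw [Sigma.mk.inj_iff] at h
        obtain ⟨h1, h2⟩ := h
        rw [heq_eq_eq] at h2
        exact Prod.ext h1 h2
      · intro h
        rw [Prod.ext_iff] at h
        exact Sigma.ext h.1 (heq_of_eq h.2)
    · -- congruence
      intro b hbB j hj
      set τ : (dirCycles B).Edge → ZMod n := fun E =>
        (if E.1.1 = (b, j) then 1 else 0) - (if E.1.1 = (b, 0) then 1 else 0) with hτdef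
      have hτten : (dirCycles B).IsTension τ := by
        rw [isTension_iff B hBpos]
        intro b' hb'
        have hterm : ∀ i ∈ range b', extE (dirCycles B) τ ((b', i), (b', (i + 1) % b')) =
            (if (b', i) = (b, j) then (1 : ZMod n) else 0)
            - (if (b', i) = (b, 0) then 1 else 0) := by
          intro i hi
          rw [← tau_cyE hb' (hBpos b' hb') (mem_range.mp hi) τ]
          have hv := cyE_val hb' (hBpos b' hb') (mem_range.mp hi) (S := B)
          simp only [hτdef, hv]
        rw [Finset.sum_congr rfl hterm, Finset.sum_sub_distrib]
        by_cases hbb : b' = b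
        · subst hbb
          simp [Prod.ext_iff, Finset.mem_range, hj, hBpos b' hb']
        · simp [Prod.ext_iff, hbb]
      have hten := hf τ hτten
      have hzero := sum_cycle_eq_zero A (τ ∘ f) hten ha h0a
      have hconv : ∀ i ∈ range a,
          extE (dirCycles A) (τ ∘ f) ((a, i), (a, (i + 1) % a)) = τ (f (cyE A a ha h0a i)) :=
        fun i hi => (tau_cyE ha h0a (mem_range.mp hi) (τ ∘ f)).symm
      rw [Finset.sum_congr rfl hconv] at hzero
      rw [hτdef] at hzero
      simp only [Finset.sum_sub_distrib, Finset.sum_boole] at hzero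
      rw [hm]
      exact sub_eq_zero.mp hzero
  · intro hcone
    have key : ∀ a ∈ A, ∃ g : ℕ → (dirCycles B).Edge, ∀ τ : (dirCycles B).Edge → ZMod n,
        (∀ b ∈ B, ∑ i ∈ range b, extE (dirCycles B) τ ((b, i), (b, (i + 1) % b)) = 0) →
        ∑ i ∈ range a, τ (g i) = 0 :=
      fun a ha => exists_good_map B hB hBpos hn a (hcone a ha)
    choose g hg using key
    refine ⟨fun e => g e.1.1.1 e.2.1 e.1.1.2, ?_⟩
    intro τ hτ
    rw [isTension_iff A hApos]
    intro a ha
    have h0a : 0 < a := hApos a ha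
    have hconv : ∀ i ∈ range a,
        extE (dirCycles A) (τ ∘ fun e => g e.1.1.1 e.2.1 e.1.1.2) ((a, i), (a, (i + 1) % a))
          = τ (g a ha i) := by
      intro i hi
      rw [← tau_cyE ha h0a (mem_range.mp hi)]
      show τ (g a ha (i % a)) = τ (g a ha i)
      rw [Nat.mod_eq_of_lt (mem_range.mp hi)]
    rw [Finset.sum_congr rfl hconv]
    exact hg a ha τ ((isTension_iff B hBpos τ).mp hτ)
end
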